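/- arXiv:2506.13337 — 9 statements merged into one kernel-verified Lean document; each statement's English description precedes it below -/
import Mathlib

section
/- For the anti-Fibonacci sequence A (OEIS A075326), defined by A_0 = 0 and the rule that A_n is the sum of the two most recent positive integers not appearing in the sequence A, one has A(n) - 5n + 2 = PD(n-1) for all n ≥ 1, where PD is the period-doubling sequence (the fixed point of the substitution 0 ↦ 01, 1 ↦ 00, indexed from 0). -/
/-- `A` and `B` (indexed from 1) are complementary strictly increasing sequences
of positive integers: every positive integer lies in exactly one of their ranges. -/
def CompPair (A B : ℕ → ℕ) : Prop :=
  StrictMonoOn A (Set.Ici 1) ∧ StrictMonoOn B (Set.Ici 1) ∧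
  (∀ n, 1 ≤ n → 1 ≤ A n) ∧ (∀ n, 1 ≤ n → 1 ≤ B n) ∧
  ∀ m, 1 ≤ m →
    ((∃ n, 1 ≤ n ∧ A n = m) ∧ ¬(∃ n, 1 ≤ n ∧ B n = m)) ∨
    (¬(∃ n, 1 ≤ n ∧ A n = m) ∧ (∃ n, 1 ≤ n ∧ B n = m))

/-- `(A, B)` is the anti-recurrence pair for the positive linear form `a` of dimension `k`:
`A n = Σ_{j=1}^k a_j * B_{(n-1)k+j}` for all `n ≥ 1`. -/
def AntiRec (k : ℕ) (a : Fin k → ℕ) (A B : ℕ → ℕ) : Prop :=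
  CompPair A B ∧
  ∀ n, 1 ≤ n → A n = ∑ j : Fin k, a j * B ((n - 1) * k + (j : ℕ) + 1)

/-- The period-doubling sequence, fixed point of 0 ↦ 01, 1 ↦ 00, indexed from 0. -/
def PD (n : ℕ) : ℕ := (padicValNat 2 (n + 1)) % 2

/-!
An anti-recurrence of this kind has at most one solution: by strong induction, a first index
where two solutions' complements differ would produce a positive integer lying in the ranges of
both `A` and `B` of one of them. So it suffices to exhibit one solution. Each block
`{5s, …, 5s + 4}` contains exactly one value of `A`, namely `A (s + 1) = 5s + 3 + PD s`, and
`B` enumerates the other four; the identity `PD (2s + 1) = 1 - PD s` is exactly what makes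
`A (s + 1) = B (2s + 1) + B (2s + 2)` hold in both parities of `s`.
-/

lemma PD_le_one (j : ℕ) : PD j ≤ 1 := Nat.lt_succ_iff.mp (Nat.mod_lt _ two_pos)

lemma PD_two_mul (j : ℕ) : PD (2 * j) = 0 := by
  rw [PD, padicValNat.eq_zero_of_not_dvd (by omega)]

lemma PD_two_mul_add_one (j : ℕ) : PD (2 * j + 1) = 1 - PD j := by
  have : Fact (Nat.Prime 2) := ⟨Nat.prime_two⟩
  rw [PD, PD, show 2 * j + 1 + 1 = 2 * (j + 1) by ring,
    padicValNat.mul two_ne_zero (by omega), padicValNat.self one_lt_two]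
  omega

namespace CompPair

variable {A B : ℕ → ℕ}

lemma not_mem_both (h : CompPair A B) {n m y : ℕ} (hn : 1 ≤ n) (hm : 1 ≤ m)
    (hA : A n = y) (hB : B m = y) : False := by
  rcases h.2.2.2.2 y (hB ▸ h.2.2.2.1 m hm) with ⟨_, hB'⟩ | ⟨hA', _⟩
  · exact hB' ⟨m, hm, hB⟩
  · exact hA' ⟨n, hn, hA⟩

lemma exists_A_eq (h : CompPair A B) {y : ℕ} (hy : 1 ≤ y) (hB : ∀ m, 1 ≤ m → B m ≠ y) :
    ∃ n, 1 ≤ n ∧ A n = y := by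
  rcases h.2.2.2.2 y hy with ⟨hA, _⟩ | ⟨_, m, hm, hBm⟩
  · exact hA
  · exact absurd hBm (hB m hm)

end CompPair

def IsAntiFib (A B : ℕ → ℕ) : Prop :=
  CompPair A B ∧ ∀ t, A (t + 1) = B (2 * t + 1) + B (2 * t + 2)

lemma isAntiFib_of_antiRec {A B : ℕ → ℕ} (h : AntiRec 2 ![1, 1] A B) : IsAntiFib A B := by
  refine ⟨h.1, fun t => ?_⟩
  rw [h.2 (t + 1) (by omega), Fin.sum_univ_two]
  simp only [Matrix.cons_val_zero, Matrix.cons_val_one, one_mul, Nat.add_sub_cancel,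
    Fin.val_zero, Fin.val_one]
  ring_nf

namespace IsAntiFib

variable {A B A' B' : ℕ → ℕ}

lemma not_lt_of_eqOn (h : IsAntiFib A B) (h' : IsAntiFib A' B') {m : ℕ} (hm : 1 ≤ m)
    (heq : ∀ i, 1 ≤ i → i < m → B i = B' i) : ¬ B m < B' m := by
  obtain ⟨hAB, hrec⟩ := h
  obtain ⟨hAB', hrec'⟩ := h'
  intro hlt
  have hB'_ne : ∀ i, 1 ≤ i → B' i ≠ B m := by
    intro i hi hi_eq
    rcases lt_or_ge i m with him | him
    · exact (hAB.2.1 hi hm him).ne (heq i hi him ▸ hi_eq)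
    · exact (hAB'.2.1.monotoneOn hm hi him).not_gt (hi_eq ▸ hlt)
  obtain ⟨n, hn, hA'n⟩ := hAB'.exists_A_eq (hAB.2.2.2.1 m hm) hB'_ne
  obtain ⟨s, rfl⟩ : ∃ s, n = s + 1 := ⟨n - 1, by omega⟩
  -- `A' (s + 1)` exceeds `B' (2s + 2)`, so all of its summands sit below the index `m`.
  have hsm : 2 * s + 2 < m := by
    have := hAB'.2.2.2.1 (2 * s + 1) (by omega)
    have := hrec' s
    exact (hAB'.2.1.lt_iff_lt (Set.mem_Ici.mpr (by omega)) (Set.mem_Ici.mpr hm)).mp (by omega)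
  have hAs : A (s + 1) = B m := by
    rw [hrec, heq _ (by omega) (by omega), heq _ (by omega) (by omega), ← hrec', hA'n]
  exact hAB.not_mem_both (by omega) hm hAs rfl

lemma B_eq (h : IsAntiFib A B) (h' : IsAntiFib A' B') : ∀ m, 1 ≤ m → B m = B' m := by
  intro m
  induction m using Nat.strong_induction_on with
  | _ m ih =>
    intro hm
    have heq : ∀ i, 1 ≤ i → i < m → B i = B' i := fun i hi him => ih i him hi
    have := h.not_lt_of_eqOn h' hm heq
    have := h'.not_lt_of_eqOn h hm fun i hi him => (heq i hi him).symm
    omega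

lemma A_eq (h : IsAntiFib A B) (h' : IsAntiFib A' B') (t : ℕ) : A (t + 1) = A' (t + 1) := by
  rw [h.2, h'.2, h.B_eq h' _ (by omega), h.B_eq h' _ (by omega)]

end IsAntiFib

def antiFibB (m : ℕ) : ℕ :=
  5 * (m / 4) + m % 4 + if m % 4 = 3 then PD (2 * (m / 4) + 1) else 0

lemma antiFibB_four_mul_add_of_lt_three (s r : ℕ) (hr : r < 3) :
    antiFibB (4 * s + r) = 5 * s + r := by
  rw [antiFibB, if_neg (by omega)]
  omega

lemma antiFibB_four_mul_add_three (s : ℕ) :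
    antiFibB (4 * s + 3) = 5 * s + 3 + PD (2 * s + 1) := by
  rw [antiFibB, if_pos (by omega), show (4 * s + 3) / 4 = s by omega]
  omega

lemma antiFibB_four_mul (s : ℕ) : antiFibB (4 * s) = 5 * s :=
  antiFibB_four_mul_add_of_lt_three s 0 (by omega)

lemma antiFibB_four_mul_add_one (s : ℕ) : antiFibB (4 * s + 1) = 5 * s + 1 :=
  antiFibB_four_mul_add_of_lt_three s 1 (by omega)

lemma antiFibB_four_mul_add_two (s : ℕ) : antiFibB (4 * s + 2) = 5 * s + 2 :=
  antiFibB_four_mul_add_of_lt_three s 2 (by omega)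

lemma strictMono_antiFibB : StrictMono antiFibB := by
  refine strictMono_nat_of_lt_succ fun m => ?_
  obtain ⟨s, r, hr, rfl⟩ : ∃ s r, r < 4 ∧ m = 4 * s + r := ⟨m / 4, m % 4, by omega, by omega⟩
  interval_cases r
  · rw [Nat.add_zero, antiFibB_four_mul, antiFibB_four_mul_add_one]; omega
  · rw [antiFibB_four_mul_add_one, antiFibB_four_mul_add_two]; omega
  · rw [antiFibB_four_mul_add_two, antiFibB_four_mul_add_three]; omega
  · rw [show 4 * s + 3 + 1 = 4 * (s + 1) by ring, antiFibB_four_mul_add_three, antiFibB_four_mul]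
    have := PD_le_one (2 * s + 1)
    omega

lemma one_le_antiFibB {m : ℕ} (hm : 1 ≤ m) : 1 ≤ antiFibB m :=
  (Nat.zero_le _).trans_lt (antiFibB_four_mul 0 ▸ strictMono_antiFibB hm)

def antiFibA (n : ℕ) : ℕ := 5 * n - 2 + PD (n - 1)

lemma antiFibA_succ (t : ℕ) : antiFibA (t + 1) = 5 * t + 3 + PD t := by
  rw [antiFibA, Nat.add_sub_cancel]
  omega

lemma antiFibA_succ_eq_add (t : ℕ) :
    antiFibA (t + 1) = antiFibB (2 * t + 1) + antiFibB (2 * t + 2) := by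
  rw [antiFibA_succ]
  rcases Nat.even_or_odd' t with ⟨u, rfl | rfl⟩
  · rw [show 2 * (2 * u) + 1 = 4 * u + 1 by ring, show 2 * (2 * u) + 2 = 4 * u + 2 by ring,
      antiFibB_four_mul_add_one, antiFibB_four_mul_add_two, PD_two_mul]
    omega
  · rw [show 2 * (2 * u + 1) + 1 = 4 * u + 3 by ring,
      show 2 * (2 * u + 1) + 2 = 4 * (u + 1) by ring,
      antiFibB_four_mul_add_three, antiFibB_four_mul]
    omega

lemma antiFibA_ne_antiFibB (t m : ℕ) : antiFibA (t + 1) ≠ antiFibB m := by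
  obtain ⟨s, r, hr, rfl⟩ : ∃ s r, r < 4 ∧ m = 4 * s + r := ⟨m / 4, m % 4, by omega, by omega⟩
  rw [antiFibA_succ]
  have := PD_le_one t
  rcases (by omega : r < 3 ∨ r = 3) with hr3 | rfl
  · rw [antiFibB_four_mul_add_of_lt_three s r hr3]; omega
  · rw [antiFibB_four_mul_add_three]
    intro heq
    obtain rfl : t = s := by have := PD_le_one (2 * s + 1); omega
    have := PD_two_mul_add_one t
    omega

lemma exists_antiFibA_or_antiFibB (y : ℕ) (hy : 1 ≤ y) :
    (∃ t, antiFibA (t + 1) = y) ∨ ∃ m, 1 ≤ m ∧ antiFibB m = y := by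
  obtain ⟨t, r, hr, rfl⟩ : ∃ t r, r < 5 ∧ y = 5 * t + r := ⟨y / 5, y % 5, by omega, by omega⟩
  have := PD_le_one t
  have := PD_two_mul_add_one t
  rcases (by omega : r < 3 ∨ 3 ≤ r) with hr3 | hr3
  · exact Or.inr ⟨4 * t + r, by omega, antiFibB_four_mul_add_of_lt_three t r hr3⟩
  · by_cases hPD : PD t = r - 3
    · exact Or.inl ⟨t, by rw [antiFibA_succ]; omega⟩
    · exact Or.inr ⟨4 * t + 3, by omega, by rw [antiFibB_four_mul_add_three]; omega⟩

lemma compPair_antiFib : CompPair antiFibA antiFibB := by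
  have hA_pos : ∀ n, 1 ≤ n → 1 ≤ antiFibA n := by
    intro n hn
    obtain ⟨t, rfl⟩ : ∃ t, n = t + 1 := ⟨n - 1, by omega⟩
    rw [antiFibA_succ]; omega
  refine ⟨?_, strictMono_antiFibB.strictMonoOn _, hA_pos, fun _ => one_le_antiFibB, ?_⟩
  · intro n (hn : 1 ≤ n) n' (hn' : 1 ≤ n') hlt
    obtain ⟨t, rfl⟩ : ∃ t, n = t + 1 := ⟨n - 1, by omega⟩
    obtain ⟨t', rfl⟩ : ∃ t', n' = t' + 1 := ⟨n' - 1, by omega⟩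
    rw [antiFibA_succ, antiFibA_succ]
    have := PD_le_one t
    omega
  · intro y hy
    have hboth : ¬ ((∃ n, 1 ≤ n ∧ antiFibA n = y) ∧ ∃ m, 1 ≤ m ∧ antiFibB m = y) := by
      rintro ⟨⟨n, hn, rfl⟩, m, -, hm⟩
      obtain ⟨t, rfl⟩ : ∃ t, n = t + 1 := ⟨n - 1, by omega⟩
      exact antiFibA_ne_antiFibB t m hm.symm
    rcases exists_antiFibA_or_antiFibB y hy with ⟨t, ht⟩ | hB
    · exact Or.inl ⟨⟨t + 1, by omega, ht⟩, fun hB => hboth ⟨⟨t + 1, by omega, ht⟩, hB⟩⟩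
    · exact Or.inr ⟨fun hA => hboth ⟨hA, hB⟩, hB⟩

lemma isAntiFib_antiFib : IsAntiFib antiFibA antiFibB :=
  ⟨compPair_antiFib, antiFibA_succ_eq_add⟩

theorem stmt0_general (A B : ℕ → ℕ) (h : AntiRec 2 ![1, 1] A B) :
    ∀ n, 1 ≤ n → (A n : ℤ) - 5 * n + 2 = PD (n - 1) := by
  intro n hn
  obtain ⟨t, rfl⟩ : ∃ t, n = t + 1 := ⟨n - 1, by omega⟩
  rw [(isAntiFib_of_antiRec h).A_eq isAntiFib_antiFib t, antiFibA_succ, Nat.add_sub_cancel]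
  push_cast
  ring

/-- Zaslavsky's formula for the anti-Fibonacci numbers: A(n) - 5n + 2 = PD(n-1). -/
theorem stmt0 (A B : ℕ → ℕ) (h : AntiRec 2 ![1, 1] A B) (h0 : A 0 = 0) :
    ∀ n, 1 ≤ n → (A n : ℤ) - 5 * n + 2 = PD (n - 1) :=
  stmt0_general A B h
end

section
/- Let a = (a_1, ..., a_k) be a vector of positive integers with k > 1. Then there exists a unique pair of complementary strictly increasing sequences (A_n)_{n≥1} and (B_n)_{n≥1} of positive integers (every positive integer lies in exactly one of the two ranges) satisfying A_n = Σ_{j=1}^k a_j · B_{(n-1)k+j} for all n ≥ 1. -/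
/-!
`B` is forced to be the greedy sequence: `B i` is the least positive integer that is neither an
earlier `B j` nor one of the `A n` already determined by `B 1, …, B (i - 1)`. Since `k > 1` and
all `a j > 0`, `A n > B (n k)`, so no later `A n` can fall below the greedy choice, which gives
complementarity; conversely, in any anti-recurrence pair every positive integer below `B i` is an
earlier `B j` or such an `A n`, so `B` satisfies the greedy recursion and is unique.
-/

open Finset

lemma CompPair.of_disjoint_of_cover {A B : ℕ → ℕ} (hA : StrictMonoOn A (Set.Ici 1))
    (hB : StrictMonoOn B (Set.Ici 1)) (hApos : ∀ n, 1 ≤ n → 1 ≤ A n)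
    (hBpos : ∀ i, 1 ≤ i → 1 ≤ B i) (hdisj : ∀ n i, 1 ≤ n → 1 ≤ i → A n ≠ B i)
    (hcover : ∀ m, 1 ≤ m → (∀ n, 1 ≤ n → A n ≠ m) → ∃ i, 1 ≤ i ∧ B i = m) : CompPair A B := by
  refine ⟨hA, hB, hApos, hBpos, fun m hm => ?_⟩
  by_cases h : ∃ n, 1 ≤ n ∧ A n = m
  · obtain ⟨n, hn, rfl⟩ := h
    exact .inl ⟨⟨n, hn, rfl⟩, fun ⟨i, hi, hBi⟩ => hdisj n i hn hi hBi.symm⟩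
  · exact .inr ⟨h, hcover m hm fun n hn hAn => h ⟨n, hn, hAn⟩⟩

lemma CompPair.ne {A B : ℕ → ℕ} (h : CompPair A B) {n i : ℕ} (hn : 1 ≤ n) (hi : 1 ≤ i) :
    A n ≠ B i := by
  intro hAB
  rcases h.2.2.2.2 (B i) (h.2.2.2.1 i hi) with ⟨-, hnB⟩ | ⟨hnA, -⟩
  · exact hnB ⟨i, hi, rfl⟩
  · exact hnA ⟨n, hn, hAB⟩

namespace AntiRecurrence

section LeastPosNotMem

lemma exists_pos_notMem (s : Finset ℕ) : ∃ m, 1 ≤ m ∧ m ∉ s :=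
  ⟨s.sup id + 1, by omega, fun h => (le_sup (f := id) h).not_gt (Nat.lt_succ_self _)⟩

def leastPosNotMem (s : Finset ℕ) : ℕ := Nat.find (exists_pos_notMem s)

lemma leastPosNotMem_spec (s : Finset ℕ) : 1 ≤ leastPosNotMem s ∧ leastPosNotMem s ∉ s :=
  Nat.find_spec (exists_pos_notMem s)

lemma leastPosNotMem_le {s : Finset ℕ} {m : ℕ} (hm : 1 ≤ m) (hms : m ∉ s) :
    leastPosNotMem s ≤ m :=
  Nat.find_min' _ ⟨hm, hms⟩

lemma eq_leastPosNotMem {s : Finset ℕ} {m : ℕ} (hm : 1 ≤ m) (hms : m ∉ s)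
    (hlt : ∀ m', 1 ≤ m' → m' < m → m' ∈ s) : m = leastPosNotMem s :=
  ((Nat.find_eq_iff _).2 ⟨⟨hm, hms⟩, fun m' hm' h => h.2 (hlt m' h.1 hm')⟩).symm

end LeastPosNotMem

section BlockForm

variable {k : ℕ} (a : Fin k → ℕ)

def blockForm (g : ℕ → ℕ) (n : ℕ) : ℕ := ∑ j : Fin k, a j * g ((n - 1) * k + j + 1)

omit a in
lemma blockIndex_le {n : ℕ} (hn : 1 ≤ n) (j : Fin k) : (n - 1) * k + j + 1 ≤ n * k := by
  obtain ⟨m, rfl⟩ := Nat.exists_eq_add_of_le' hn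
  have := j.2
  simp only [Nat.add_sub_cancel, Nat.succ_mul]
  omega

lemma blockForm_congr {g g' : ℕ → ℕ} {n : ℕ} (hn : 1 ≤ n)
    (h : ∀ i, 1 ≤ i → i ≤ n * k → g i = g' i) : blockForm a g n = blockForm a g' n :=
  sum_congr rfl fun j _ => by rw [h _ (by omega) (blockIndex_le hn j)]

variable {a}

lemma lt_blockForm (hk : 1 < k) (ha : ∀ j, 0 < a j) {g : ℕ → ℕ} (hg : ∀ i, 1 ≤ i → 1 ≤ g i)
    {n : ℕ} (hn : 1 ≤ n) : g (n * k) < blockForm a g n := by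
  let first : Fin k := ⟨0, by omega⟩
  let last : Fin k := ⟨k - 1, by omega⟩
  have hlast : (n - 1) * k + (last : ℕ) + 1 = n * k := by
    obtain ⟨m, rfl⟩ := Nat.exists_eq_add_of_le' hn
    simp only [last, Nat.add_sub_cancel, Nat.succ_mul]
    omega
  calc g (n * k) ≤ a last * g (n * k) := Nat.le_mul_of_pos_left _ (ha last)
    _ < ∑ j, a j * g ((n - 1) * k + j + 1) := by
      rw [← hlast]
      refine single_lt_sum (f := fun j => a j * g ((n - 1) * k + j + 1))
        (Fin.ne_of_val_ne (show 0 ≠ k - 1 by omega)) (mem_univ last) (mem_univ first) ?_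
        fun _ _ _ => Nat.zero_le _
      exact Nat.mul_pos (ha first) (hg _ (by omega))

lemma lt_blockForm_of_le (hk : 1 < k) (ha : ∀ j, 0 < a j) {g : ℕ → ℕ}
    (hg : StrictMonoOn g (Set.Ici 1)) (hgpos : ∀ i, 1 ≤ i → 1 ≤ g i) {n i : ℕ} (hn : 1 ≤ n)
    (hi : 1 ≤ i) (hin : i ≤ n * k) : g i < blockForm a g n :=
  (hg.monotoneOn hi (hi.trans hin) hin).trans_lt (lt_blockForm hk ha hgpos hn)

lemma blockForm_strictMonoOn (hk : 0 < k) (ha : ∀ j, 0 < a j) {g : ℕ → ℕ}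
    (hg : StrictMonoOn g (Set.Ici 1)) : StrictMonoOn (blockForm a g) (Set.Ici 1) := by
  intro n hn n' _ hnn'
  have hidx : (n - 1) * k < (n' - 1) * k :=
    Nat.mul_lt_mul_of_pos_right (by simp only [Set.mem_Ici] at hn; omega) hk
  have : Nonempty (Fin k) := ⟨⟨0, hk⟩⟩
  exact sum_lt_sum_of_nonempty univ_nonempty fun j _ =>
    Nat.mul_lt_mul_of_pos_left (hg (by simp) (by simp) (by omega)) (ha j)

end BlockForm

section Greedy

variable {k : ℕ} (a : Fin k → ℕ)

/-- For `g = B`: the earlier `B j` and the `A n` already determined by `B 1, …, B (i - 1)`.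
The bound `n < i` only matters for `k = 0`, where it keeps the set finite. -/
def forbidden (g : ℕ → ℕ) (i : ℕ) : Finset ℕ :=
  (Ico 1 i).image g ∪ ((Ico 1 i).filter (fun n => n * k < i)).image (blockForm a g)

def IsGreedy (g : ℕ → ℕ) : Prop := ∀ i, 1 ≤ i → g i = leastPosNotMem (forbidden a g i)

def greedy (i : ℕ) : ℕ :=
  leastPosNotMem (forbidden a (fun j => if j < i then greedy j else 0) i)

variable {a} {g : ℕ → ℕ}

lemma mem_forbidden {i m : ℕ} :
    m ∈ forbidden a g i ↔
      (∃ j, 1 ≤ j ∧ j < i ∧ g j = m) ∨ ∃ n, 1 ≤ n ∧ n < i ∧ n * k < i ∧ blockForm a g n = m := by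
  simp [forbidden, and_assoc]

lemma apply_mem_forbidden {i j : ℕ} (hj : 1 ≤ j) (hji : j < i) : g j ∈ forbidden a g i :=
  mem_forbidden.2 (.inl ⟨j, hj, hji, rfl⟩)

lemma blockForm_mem_forbidden (hk : 0 < k) {i n : ℕ} (hn : 1 ≤ n) (hni : n * k < i) :
    blockForm a g n ∈ forbidden a g i :=
  mem_forbidden.2 (.inr ⟨n, hn, (Nat.le_mul_of_pos_right n hk).trans_lt hni, hni, rfl⟩)

lemma forbidden_mono {i i' : ℕ} (h : i ≤ i') : forbidden a g i ⊆ forbidden a g i' := by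
  intro m
  simp only [mem_forbidden]
  rintro (⟨j, hj, hji, rfl⟩ | ⟨n, hn, hni, hnk, rfl⟩)
  · exact .inl ⟨j, hj, by omega, rfl⟩
  · exact .inr ⟨n, hn, by omega, by omega, rfl⟩

lemma forbidden_congr {g' : ℕ → ℕ} {i : ℕ} (h : ∀ j, 1 ≤ j → j < i → g j = g' j) :
    forbidden a g i = forbidden a g' i := by
  unfold forbidden
  congr 1
  · exact image_congr fun j hj => by simp only [coe_Ico, Set.mem_Ico] at hj; exact h j hj.1 hj.2
  · refine image_congr fun n hn => ?_
    simp only [coe_filter, mem_Ico, Set.mem_ofPred_eq] at hn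
    exact blockForm_congr a hn.1.1 fun j hj hjn => h j hj (by omega)

lemma IsGreedy.eqOn {g' : ℕ → ℕ} (hg : IsGreedy a g) (hg' : IsGreedy a g') :
    Set.EqOn g g' (Set.Ici 1) := by
  intro i
  induction i using Nat.strong_induction_on with
  | _ i ih =>
    intro hi
    rw [hg i hi, hg' i hi, forbidden_congr fun j hj hji => ih j hji hj]

lemma isGreedy_greedy : IsGreedy a (greedy a) := by
  intro i _
  rw [greedy]
  exact congrArg _ (forbidden_congr fun j _ hji => if_pos hji)

lemma IsGreedy.pos (hg : IsGreedy a g) {i : ℕ} (hi : 1 ≤ i) : 1 ≤ g i :=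
  hg i hi ▸ (leastPosNotMem_spec _).1

lemma IsGreedy.notMem_forbidden (hg : IsGreedy a g) {i : ℕ} (hi : 1 ≤ i) :
    g i ∉ forbidden a g i :=
  hg i hi ▸ (leastPosNotMem_spec _).2

lemma IsGreedy.strictMonoOn (hg : IsGreedy a g) : StrictMonoOn g (Set.Ici 1) := by
  intro j hj i hi hji
  have hle : g j ≤ g i := by
    rw [hg j hj]
    exact leastPosNotMem_le (hg.pos hi) fun h => hg.notMem_forbidden hi (forbidden_mono hji.le h)
  exact lt_of_le_of_ne hle fun h => hg.notMem_forbidden hi (h ▸ apply_mem_forbidden hj hji)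

lemma IsGreedy.blockForm_ne (hk : 1 < k) (ha : ∀ j, 0 < a j) (hg : IsGreedy a g) {n i : ℕ}
    (hn : 1 ≤ n) (hi : 1 ≤ i) : blockForm a g n ≠ g i := by
  intro h
  rcases lt_or_ge (n * k) i with hni | hin
  · exact hg.notMem_forbidden hi (h ▸ blockForm_mem_forbidden (by omega) hn hni)
  · exact (lt_blockForm_of_le hk ha hg.strictMonoOn (fun _ => hg.pos) hn hi hin).ne' h

lemma IsGreedy.exists_eq (hg : IsGreedy a g) {m : ℕ} (hm : 1 ≤ m)
    (hA : ∀ n, 1 ≤ n → blockForm a g n ≠ m) : ∃ i, 1 ≤ i ∧ g i = m := by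
  by_contra! hB
  have hle : ∀ i, 1 ≤ i → g i ≤ m := fun i hi => by
    rw [hg i hi]
    refine leastPosNotMem_le hm fun h => ?_
    rcases mem_forbidden.1 h with ⟨j, hj, -, hgj⟩ | ⟨n, hn, -, -, hgn⟩
    exacts [hB j hj hgj, hA n hn hgn]
  have hgrowth : StrictMono fun i => g (i + 1) := fun i j hij =>
    hg.strictMonoOn (show 1 ≤ i + 1 by omega) (show 1 ≤ j + 1 by omega) (by omega)
  have : m + 1 ≤ g (m + 2) := hgrowth.id_le (m + 1)
  have := hle (m + 2) (by omega)
  omega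

lemma IsGreedy.antiRec (hk : 1 < k) (ha : ∀ j, 0 < a j) (hg : IsGreedy a g) :
    AntiRec k a (blockForm a g) g :=
  ⟨CompPair.of_disjoint_of_cover (blockForm_strictMonoOn (by omega) ha hg.strictMonoOn)
    hg.strictMonoOn
    (fun n hn => (hg.pos (Nat.mul_pos hn (by omega))).trans
      (lt_blockForm hk ha (fun _ => hg.pos) hn).le)
    (fun _ => hg.pos) (fun _ _ hn hi => hg.blockForm_ne hk ha hn hi)
    (fun _ hm hA => hg.exists_eq hm hA), fun _ _ => rfl⟩

lemma AntiRec.isGreedy (hk : 1 < k) (ha : ∀ j, 0 < a j) {A B : ℕ → ℕ} (h : AntiRec k a A B) :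
    IsGreedy a B := by
  obtain ⟨-, hBmono, -, hBpos, hcover⟩ := h.1
  have hrec : ∀ n, 1 ≤ n → A n = blockForm a B n := h.2
  intro i hi
  refine eq_leastPosNotMem (hBpos i hi) (fun hmem => ?_) fun m hm hmi => ?_
  · rcases mem_forbidden.1 hmem with ⟨j, hj, hji, hBj⟩ | ⟨n, hn, -, -, hAn⟩
    · exact (hBmono hj hi hji).ne hBj
    · exact CompPair.ne h.1 hn hi ((hrec n hn).trans hAn)
  · rcases hcover m hm with ⟨⟨n, hn, rfl⟩, -⟩ | ⟨-, ⟨j, hj, rfl⟩⟩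
    · rw [hrec n hn] at hmi ⊢
      have hni : n * k < i := by
        by_contra! hin
        exact (lt_blockForm_of_le hk ha hBmono hBpos hn hi hin).not_gt hmi
      exact blockForm_mem_forbidden (by omega) hn hni
    · exact apply_mem_forbidden hj ((hBmono.lt_iff_lt hj hi).1 hmi)

end Greedy

end AntiRecurrence

open AntiRecurrence in
/-- A positive linear form determines a unique anti-recurrence pair. -/
theorem stmt2 (k : ℕ) (hk : 1 < k) (a : Fin k → ℕ) (ha : ∀ j, 0 < a j) :
    ∃ A B : ℕ → ℕ, AntiRec k a A B ∧
      ∀ A' B' : ℕ → ℕ, AntiRec k a A' B' →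
        ∀ n, 1 ≤ n → A' n = A n ∧ B' n = B n := by
  refine ⟨blockForm a (greedy a), greedy a, isGreedy_greedy.antiRec hk ha, ?_⟩
  intro A' B' h' n hn
  have hB : Set.EqOn B' (greedy a) (Set.Ici 1) := (h'.isGreedy hk ha).eqOn isGreedy_greedy
  exact ⟨(h'.2 n hn).trans (blockForm_congr a hn fun i hi _ => hB hi), hB hn⟩
end

section
/- Let (A_n) be the anti-recurrence sequence for the linear form a = (1,2) (the anti-Pell numbers, OEIS A304502). Then 0 ≤ A_n - 7n + 3 ≤ 2 for all n ≥ 1. -/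
/-!
Counting the terms of `A` and of `B` up to `B m` gives `B m = m + #{k | A k < B m}`. If
`A k + 1 ≤ 7 k ≤ A k + 3` for all `k < n`, that count is `B m / 7` up to rounding, whence
`7 m ≤ 6 B m + 5` and `6 B m ≤ 7 m + 2` for `m ≤ 2 n`. Then `A n = B (2n-1) + 2 B (2n)`
satisfies the same bounds, and strong induction on `n` closes the argument.
-/

open Finset

/-- The number of indices `k ≥ 1` with `A k ≤ y`; searching `Icc 1 y` finds all of them as soon
as `k ≤ A k`. -/
def countLE (A : ℕ → ℕ) (y : ℕ) : ℕ :=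
  #{k ∈ Icc 1 y | A k ≤ y}

section

variable {A B : ℕ → ℕ}

lemma le_apply_of_strictMonoOn (hA : StrictMonoOn A (Set.Ici 1)) (h1 : 1 ≤ A 1) :
    ∀ n, 1 ≤ n → n ≤ A n := by
  intro n hn
  induction n, hn using Nat.le_induction with
  | base => exact h1
  | succ n hn ih =>
    have := hA (Set.mem_Ici.mpr hn) (Set.mem_Ici.mpr (by omega)) (by omega : n < n + 1)
    omega

lemma countLE_le {y c : ℕ} (h : ∀ k, 1 ≤ k → A k ≤ y → k ≤ c) : countLE A y ≤ c := by
  calc countLE A y ≤ #(Icc 1 c) := by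
        refine card_le_card fun k hk => ?_
        simp only [mem_filter, mem_Icc] at hk ⊢
        exact ⟨hk.1.1, h k hk.1.1 hk.2⟩
    _ = c := by simp

lemma le_countLE (hA : ∀ k, 1 ≤ k → k ≤ A k) {y c : ℕ} (h : ∀ k, 1 ≤ k → k ≤ c → A k ≤ y) :
    c ≤ countLE A y := by
  calc c = #(Icc 1 c) := by simp
    _ ≤ countLE A y := by
        refine card_le_card fun k hk => ?_
        simp only [mem_filter, mem_Icc] at hk ⊢
        have hAk := h k hk.1 hk.2
        exact ⟨⟨hk.1, (hA k hk.1).trans hAk⟩, hAk⟩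

lemma countLE_eq_card_image (hA : StrictMonoOn A (Set.Ici 1)) (y : ℕ) :
    countLE A y = #({k ∈ Icc 1 y | A k ≤ y}.image A) := by
  refine (card_image_of_injOn fun a ha b hb hab => ?_).symm
  simp only [coe_filter, mem_Icc] at ha hb
  exact hA.injOn (Set.mem_Ici.mpr ha.1.1) (Set.mem_Ici.mpr hb.1.1) hab

lemma countLE_apply (hA : StrictMonoOn A (Set.Ici 1)) (hA1 : ∀ k, 1 ≤ k → k ≤ A k)
    {m : ℕ} (hm : 1 ≤ m) : countLE A (A m) = m :=
  le_antisymm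
    (countLE_le fun _ hk hkm => (hA.le_iff_le (Set.mem_Ici.mpr hk) (Set.mem_Ici.mpr hm)).1 hkm)
    (le_countLE hA1 fun _ hk hkm =>
      (hA.le_iff_le (Set.mem_Ici.mpr hk) (Set.mem_Ici.mpr hm)).2 hkm)

namespace CompPair

variable (h : CompPair A B)
include h

lemma le_left : ∀ k, 1 ≤ k → k ≤ A k :=
  le_apply_of_strictMonoOn h.1 (h.2.2.1 1 le_rfl)

lemma le_right : ∀ k, 1 ≤ k → k ≤ B k :=
  le_apply_of_strictMonoOn h.2.1 (h.2.2.2.1 1 le_rfl)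

lemma left_ne_right {k m : ℕ} (hk : 1 ≤ k) (hm : 1 ≤ m) : A k ≠ B m := by
  intro he
  rcases h.2.2.2.2 (B m) (h.2.2.2.1 m hm) with ⟨-, hB⟩ | ⟨hA, -⟩
  · exact hB ⟨m, hm, rfl⟩
  · exact hA ⟨k, hk, he⟩

lemma countLE_add_countLE (y : ℕ) : countLE A y + countLE B y = y := by
  have hdisj : Disjoint ({k ∈ Icc 1 y | A k ≤ y}.image A) ({k ∈ Icc 1 y | B k ≤ y}.image B) := by
    simp only [disjoint_left, mem_image, mem_filter, mem_Icc]
    rintro _ ⟨k, ⟨⟨hk, -⟩, -⟩, rfl⟩ ⟨m, ⟨⟨hm, -⟩, -⟩, he⟩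
    exact h.left_ne_right hk hm he.symm
  have hunion : {k ∈ Icc 1 y | A k ≤ y}.image A ∪ {k ∈ Icc 1 y | B k ≤ y}.image B
      = Icc 1 y := by
    ext i
    simp only [mem_union, mem_image, mem_filter, mem_Icc]
    constructor
    · rintro (⟨k, ⟨⟨hk, -⟩, hky⟩, rfl⟩ | ⟨k, ⟨⟨hk, -⟩, hky⟩, rfl⟩)
      · exact ⟨h.2.2.1 k hk, hky⟩
      · exact ⟨h.2.2.2.1 k hk, hky⟩
    · rintro ⟨hi, hiy⟩
      rcases h.2.2.2.2 i hi with ⟨⟨k, hk, rfl⟩, -⟩ | ⟨-, ⟨k, hk, rfl⟩⟩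
      · exact Or.inl ⟨k, ⟨⟨hk, (h.le_left k hk).trans hiy⟩, hiy⟩, rfl⟩
      · exact Or.inr ⟨k, ⟨⟨hk, (h.le_right k hk).trans hiy⟩, hiy⟩, rfl⟩
  rw [countLE_eq_card_image h.1, countLE_eq_card_image h.2.1, ← card_union_of_disjoint hdisj,
    hunion, Nat.card_Icc, Nat.add_sub_cancel]

lemma countLE_left_apply_right {m : ℕ} (hm : 1 ≤ m) : countLE A (B m) + m = B m := by
  simpa only [countLE_apply h.2.1 h.le_right hm] using h.countLE_add_countLE (B m)

end CompPair

namespace CompPair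

variable (h : CompPair A B)
include h

lemma six_mul_right_le {n m : ℕ} (hn : 1 ≤ n) (hA : ∀ k, 1 ≤ k → k < n → 7 * k ≤ A k + 3)
    (hm : 1 ≤ m) (hmn : B m < A n) : 6 * B m ≤ 7 * m + 2 := by
  have hcount : countLE A (B m) ≤ (B m + 2) / 7 := countLE_le fun k hk hAk => by
    have hlt : A k < B m := lt_of_le_of_ne hAk (h.left_ne_right hk hm)
    have hkn : k < n :=
      (h.1.lt_iff_lt (Set.mem_Ici.mpr hk) (Set.mem_Ici.mpr hn)).1 (hlt.trans hmn)
    have := hA k hk hkn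
    omega
  have := h.countLE_left_apply_right hm
  omega

lemma seven_mul_le_right {n m : ℕ} (hA : ∀ k, 1 ≤ k → k < n → A k + 1 ≤ 7 * k)
    (hm : 1 ≤ m) (hmn : B m + 1 < 7 * n) : 7 * m ≤ 6 * B m + 5 := by
  have hcount : (B m + 1) / 7 ≤ countLE A (B m) := le_countLE h.le_left fun k hk hk7 => by
    have := hA k hk (by omega)
    omega
  have := h.countLE_left_apply_right hm
  omega

end CompPair

lemma antiPell_apply_eq (h : AntiRec 2 ![1, 2] A B) {n : ℕ} (hn : 1 ≤ n) :
    A n = B (2 * n - 1) + 2 * B (2 * n) := by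
  rw [h.2 n hn, Fin.sum_univ_two]
  simp only [Matrix.cons_val_zero, Matrix.cons_val_one, Fin.val_zero, Fin.val_one, one_mul]
  congr 3 <;> omega

lemma antiPell_bounds (h : AntiRec 2 ![1, 2] A B) :
    ∀ n, 1 ≤ n → A n + 1 ≤ 7 * n ∧ 7 * n ≤ A n + 3 := by
  intro n
  induction n using Nat.strong_induction_on with
  | _ n ih =>
  intro hn
  have hc := h.1
  have hAn := antiPell_apply_eq h hn
  have hB₁ := hc.2.2.2.1 (2 * n - 1) (by omega)
  have hB₂ := hc.2.2.2.1 (2 * n) (by omega)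
  have hu₁ := hc.six_mul_right_le hn (fun k hk hkn => (ih k hkn hk).2) (m := 2 * n - 1)
    (by omega) (by omega)
  have hu₂ := hc.six_mul_right_le hn (fun k hk hkn => (ih k hkn hk).2) (m := 2 * n)
    (by omega) (by omega)
  have hl₁ := hc.seven_mul_le_right (fun k hk hkn => (ih k hkn hk).1) (m := 2 * n - 1)
    (by omega) (by omega)
  have hl₂ := hc.seven_mul_le_right (fun k hk hkn => (ih k hkn hk).1) (m := 2 * n)
    (by omega) (by omega)
  omega

end

/-- Kimberling's bounds on the anti-Pell numbers: 0 ≤ A n - 7n + 3 ≤ 2. -/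
theorem stmt3 (A B : ℕ → ℕ) (h : AntiRec 2 ![1, 2] A B) :
    ∀ n, 1 ≤ n → 0 ≤ (A n : ℤ) - 7 * n + 3 ∧ (A n : ℤ) - 7 * n + 3 ≤ 2 := by
  intro n hn
  have := antiPell_bounds h n hn
  omega
end

section
/- Let (A_n, B_n) be the anti-recurrence pair for a = (1,2) (anti-Pell), and write B^1_n = B_{2n-1}, B^2_n = B_{2n}. Then 0 ≤ 3·B^1_n - 7n + 6 ≤ 3 and 0 ≤ 3·B^2_n - 7n + 2 ≤ 3 for all n ≥ 1. -/
/-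
Complementarity gives the counting identity `B k = k + c`, where `c` is the number of `A`-values
below `B k`. For the anti-Pell pair the finer invariant is `7n - 3 ≤ A n ≤ 7n - 1`: by strong
induction, this bound for the indices below `n` pins down `c` (through `A c < B k < A (c + 1)`)
for `k = 2n - 1` and `k = 2n`, which gives the stated bounds on `B (2n - 1)` and `B (2n)`, and
then `A n = B (2n - 1) + 2 B (2n)` satisfies the invariant again.
-/

open Set

section Counting

variable {f : ℕ → ℕ} {M a : ℕ}

lemma StrictMonoOn.le_add_one_iff_of_mem_image (hf : StrictMonoOn f (Ici 1))
    (ha : ∀ j, 1 ≤ j → (f j ≤ M ↔ j ≤ a)) (hM : M + 1 ∈ f '' Ici 1) :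
    ∀ j, 1 ≤ j → (f j ≤ M + 1 ↔ j ≤ a + 1) := by
  obtain ⟨n, hn, hfn⟩ := hM
  have han : a < n := by
    by_contra! h
    have := (ha n hn).2 h
    omega
  have hna : n ≤ a + 1 := by
    by_contra! h
    have hlt : f (a + 1) < f n := hf (mem_Ici.2 (by omega)) (mem_Ici.2 hn) h
    have := (ha (a + 1) (by omega)).1 (by omega)
    omega
  intro j hj
  rw [← hfn, hf.le_iff_le (mem_Ici.2 hj) (mem_Ici.2 hn)]
  omega

lemma le_add_one_iff_of_notMem_image (ha : ∀ j, 1 ≤ j → (f j ≤ M ↔ j ≤ a))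
    (hM : M + 1 ∉ f '' Ici 1) :
    ∀ j, 1 ≤ j → (f j ≤ M + 1 ↔ j ≤ a) := by
  intro j hj
  have : f j ≠ M + 1 := fun h => hM ⟨j, hj, h⟩
  rw [← ha j hj]
  omega

end Counting

namespace CompPair

variable {A B : ℕ → ℕ}

lemma exists_counts (hC : CompPair A B) (M : ℕ) :
    ∃ a b, a + b = M ∧ (∀ j, 1 ≤ j → (A j ≤ M ↔ j ≤ a)) ∧
      (∀ j, 1 ≤ j → (B j ≤ M ↔ j ≤ b)) := by
  obtain ⟨hA, hB, hA1, hB1, hcomp⟩ := hC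
  induction M with
  | zero =>
    refine ⟨0, 0, rfl, fun j hj => ?_, fun j hj => ?_⟩
    · have := hA1 j hj
      omega
    · have := hB1 j hj
      omega
  | succ M ih =>
    obtain ⟨a, b, hab, ha, hb⟩ := ih
    rcases hcomp (M + 1) (by omega) with ⟨hAM, hBM⟩ | ⟨hAM, hBM⟩
    · exact ⟨a + 1, b, by omega, hA.le_add_one_iff_of_mem_image ha hAM,
        le_add_one_iff_of_notMem_image hb hBM⟩
    · exact ⟨a, b + 1, by omega, le_add_one_iff_of_notMem_image ha hAM,
        hB.le_add_one_iff_of_mem_image hb hBM⟩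

lemma ne_s4 (hC : CompPair A B) {i j : ℕ} (hi : 1 ≤ i) (hj : 1 ≤ j) : A i ≠ B j := by
  intro h
  obtain ⟨-, -, -, hB1, hcomp⟩ := hC
  rcases hcomp (B j) (hB1 j hj) with ⟨_, hB⟩ | ⟨hA, _⟩
  · exact hB ⟨j, hj, rfl⟩
  · exact hA ⟨i, hi, h⟩

lemma exists_eq_add_count (hC : CompPair A B) {k : ℕ} (hk : 1 ≤ k) :
    ∃ c, B k = k + c ∧ ∀ j, 1 ≤ j → (A j < B k ↔ j ≤ c) := by
  obtain ⟨c, b, hcb, hc, hb⟩ := hC.exists_counts (B k)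
  have hBk : ∀ j, 1 ≤ j → (j ≤ k ↔ j ≤ b) := fun j hj =>
    (hC.2.1.le_iff_le (mem_Ici.2 hj) (mem_Ici.2 hk)).symm.trans (hb j hj)
  have hkb : k = b := by
    have := (hBk k hk).1 le_rfl
    have := (hBk b (by omega)).2 le_rfl
    omega
  refine ⟨c, by omega, fun j hj => ?_⟩
  rw [← hc j hj]
  have := hC.ne_s4 hj hk
  omega

end CompPair

namespace AntiRec

variable {A B : ℕ → ℕ}

lemma antiPell_eq (h : AntiRec 2 ![1, 2] A B) {n : ℕ} (hn : 1 ≤ n) :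
    A n = B (2 * n - 1) + 2 * B (2 * n) := by
  rw [h.2 n hn, Fin.sum_univ_two]
  have e0 : (n - 1) * 2 + 0 + 1 = 2 * n - 1 := by omega
  have e1 : (n - 1) * 2 + 1 + 1 = 2 * n := by omega
  simp only [Matrix.cons_val_zero, Matrix.cons_val_one, Fin.val_zero, Fin.val_one, one_mul]
  rw [e1, e0]

lemma antiPell_B_lt (h : AntiRec 2 ![1, 2] A B) {n k : ℕ} (hk : 1 ≤ k) (hkn : k ≤ 2 * n) :
    B k < A n := by
  obtain ⟨-, hB, -, hB1, -⟩ := h.1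
  have hBk : B k ≤ B (2 * n) := (hB.le_iff_le (mem_Ici.2 hk) (mem_Ici.2 (by omega))).2 hkn
  have := hB1 (2 * n - 1) (by omega)
  rw [h.antiPell_eq (by omega)]
  omega

/-- `c` counts the `A`-values below `B k`; its bounds come from `A c < B k < A (c + 1)`. -/
lemma antiPell_exists_B_eq_add (h : AntiRec 2 ![1, 2] A B) {n k : ℕ} (hk : 1 ≤ k)
    (hkn : k ≤ 2 * n)
    (hA : ∀ c, 1 ≤ c → c < n → 7 * c ≤ A c + 3 ∧ A c + 1 ≤ 7 * c) :
    ∃ c, B k = k + c ∧ k < 6 * c + 6 ∧ 6 * c < k + 3 := by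
  obtain ⟨c, hBk, hc⟩ := h.1.exists_eq_add_count hk
  have hcn : c < n := by
    by_contra! hnc
    have := (hc n (by omega)).2 hnc
    have := h.antiPell_B_lt hk hkn
    omega
  refine ⟨c, hBk, ?_, ?_⟩
  · by_cases hc1 : c + 1 < n
    · have : ¬A (c + 1) < B k := mt (hc (c + 1) le_add_self).1 (by omega)
      have := h.1.ne_s4 (le_add_self : 1 ≤ c + 1) hk
      have := hA (c + 1) le_add_self hc1
      omega
    · omega
  · rcases Nat.eq_zero_or_pos c with hc0 | hc0
    · omega
    · have := (hc c hc0).2 le_rfl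
      have := hA c hc0 hcn
      omega

lemma antiPell_A_bounds (h : AntiRec 2 ![1, 2] A B) :
    ∀ n, 1 ≤ n → 7 * n ≤ A n + 3 ∧ A n + 1 ≤ 7 * n := by
  intro n
  induction n using Nat.strong_induction_on with
  | _ n ih =>
    intro hn
    have hA : ∀ c, 1 ≤ c → c < n → 7 * c ≤ A c + 3 ∧ A c + 1 ≤ 7 * c :=
      fun c hc hcn => ih c hcn hc
    obtain ⟨c, hc, hc'⟩ :=
      h.antiPell_exists_B_eq_add (k := 2 * n - 1) (by omega) (by omega) hA
    obtain ⟨d, hd, hd'⟩ := h.antiPell_exists_B_eq_add (k := 2 * n) (by omega) le_rfl hA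
    rw [h.antiPell_eq hn]
    omega

end AntiRec

/-- Kimberling's bounds on the non-anti-Pell sequences B¹ and B². -/
theorem stmt4 (A B : ℕ → ℕ) (h : AntiRec 2 ![1, 2] A B) :
    ∀ n, 1 ≤ n →
      (0 ≤ 3 * (B (2 * n - 1) : ℤ) - 7 * n + 6 ∧ 3 * (B (2 * n - 1) : ℤ) - 7 * n + 6 ≤ 3) ∧
      (0 ≤ 3 * (B (2 * n) : ℤ) - 7 * n + 2 ∧ 3 * (B (2 * n) : ℤ) - 7 * n + 2 ≤ 3) := by
  intro n hn
  have hA : ∀ c, 1 ≤ c → c < n → 7 * c ≤ A c + 3 ∧ A c + 1 ≤ 7 * c :=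
    fun c hc _ => h.antiPell_A_bounds c hc
  obtain ⟨c, hc, hc'⟩ := h.antiPell_exists_B_eq_add (k := 2 * n - 1) (by omega) (by omega) hA
  obtain ⟨d, hd, hd'⟩ := h.antiPell_exists_B_eq_add (k := 2 * n) (by omega) le_rfl hA
  omega
end

section
/- No anti-Jacobsthal number is divisible by 3; i.e., for the anti-recurrence sequence A with a = (2,1), A_n ≢ 0 (mod 3) for all n ≥ 1. -/
namespace CompPair

variable {A B : ℕ → ℕ}

theorem right_lt_right (h : CompPair A B) {i j : ℕ} (hi : 1 ≤ i) (hij : i < j) : B i < B j :=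
  h.2.1 (Set.mem_Ici.mpr hi) (Set.mem_Ici.mpr (hi.trans hij.le)) hij

theorem left_lt_left (h : CompPair A B) {i j : ℕ} (hi : 1 ≤ i) (hij : i < j) : A i < A j :=
  h.1 (Set.mem_Ici.mpr hi) (Set.mem_Ici.mpr (hi.trans hij.le)) hij

theorem exists_left_eq_of_lt_of_lt (h : CompPair A B) {i m : ℕ} (hi : 1 ≤ i)
    (hlo : B i < m) (hhi : m < B (i + 1)) : ∃ n, 1 ≤ n ∧ A n = m := by
  have hnotB : ¬∃ j, 1 ≤ j ∧ B j = m := by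
    rintro ⟨j, hj, rfl⟩
    have hij := (h.2.1.lt_iff_lt hi hj).mp hlo
    have hji := (h.2.1.lt_iff_lt hj (Set.mem_Ici.mpr (Nat.le_add_left 1 i))).mp hhi
    omega
  rcases h.2.2.2.2 m (by omega) with ⟨hA, _⟩ | ⟨_, hB⟩
  · exact hA
  · exact absurd hB hnotB

end CompPair

namespace AntiRec

variable {A B : ℕ → ℕ}

theorem jacobsthal_apply_succ (h : AntiRec 2 ![2, 1] A B) (n : ℕ) :
    A (n + 1) = 2 * B (2 * n + 1) + B (2 * n + 2) := by
  rw [h.2 (n + 1) (by omega)]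
  simp [Fin.sum_univ_two, mul_comm n 2]

theorem jacobsthal_add_six_le (h : AntiRec 2 ![2, 1] A B) {p q : ℕ} (hp : 1 ≤ p) (hpq : p < q) :
    A p + 6 ≤ A q := by
  obtain ⟨n, rfl⟩ : ∃ n, p = n + 1 := ⟨p - 1, by omega⟩
  have hsucc : A (n + 1) + 6 ≤ A (n + 2) := by
    have hB₁ := h.1.right_lt_right (i := 2 * n + 1) (j := 2 * n + 2) (by omega) (by omega)
    have hB₂ := h.1.right_lt_right (i := 2 * n + 2) (j := 2 * n + 3) (by omega) (by omega)
    have hB₃ := h.1.right_lt_right (i := 2 * n + 3) (j := 2 * n + 4) (by omega) (by omega)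
    have h₁ := h.jacobsthal_apply_succ n
    have h₂ := h.jacobsthal_apply_succ (n + 1)
    rw [show n + 1 + 1 = n + 2 by ring, show 2 * (n + 1) + 1 = 2 * n + 3 by ring,
      show 2 * (n + 1) + 2 = 2 * n + 4 by ring] at h₂
    omega
  rcases (show n + 2 ≤ q by omega).eq_or_lt with rfl | hlt
  · exact hsucc
  · exact hsucc.trans (h.1.left_lt_left (by omega) hlt).le

end AntiRec

/-- No anti-Jacobsthal number is divisible by 3. -/
theorem stmt7 (A B : ℕ → ℕ) (h : AntiRec 2 ![2, 1] A B) :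
    ∀ n, 1 ≤ n → A n % 3 ≠ 0 := by
  rintro _ hn hmod
  obtain ⟨n, rfl⟩ : ∃ n, _ = n + 1 := ⟨_ - 1, (Nat.sub_add_cancel hn).symm⟩
  have hA := h.jacobsthal_apply_succ n
  have hB := h.1.right_lt_right (i := 2 * n + 1) (j := 2 * n + 2) (by omega) (by omega)
  obtain ⟨p, hp, hAp⟩ := h.1.exists_left_eq_of_lt_of_lt (i := 2 * n + 1) (m := B (2 * n + 1) + 1)
    (by omega) (by omega) (show _ < B (2 * n + 2) by omega)
  obtain ⟨q, hq, hAq⟩ := h.1.exists_left_eq_of_lt_of_lt (i := 2 * n + 1) (m := B (2 * n + 1) + 2)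
    (by omega) (by omega) (show _ < B (2 * n + 2) by omega)
  rcases lt_trichotomy p q with hpq | rfl | hqp
  · have := h.jacobsthal_add_six_le hp hpq
    omega
  · omega
  · have := h.jacobsthal_add_six_le hq hqp
    omega
end

section
/- For the anti-Jacobsthal numbers (a = (2,1)), writing B^1_n = B_{2n-1} and B^2_n = B_{2n}, one has B^1_n = ⌊A_n/3⌋ and B^2_n = A_n - 2·⌊A_n/3⌋ for all n ≥ 1, and moreover 0 ≤ 3·B^2_n - 7n + 2 ≤ 3. -/
/-!
Consecutive values of `A` differ by at least `6`, so no two consecutive integers are values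
of `A` and every gap `B (m + 1) - B m` is `1` or `2`. As
`A n = 3 B (2n - 1) + (B (2n) - B (2n - 1))`, this gives both floor formulas. The bounds on
`3 B (2n)` come with `7n - 4 ≤ A n ≤ 7n - 1`, proved together by strong induction from
`B m = m + #{j | A j < B m}`.
-/

lemma StrictMonoOn.self_le_of_one_le {f : ℕ → ℕ} (hf : StrictMonoOn f (Set.Ici 1))
    (hf1 : 1 ≤ f 1) {n : ℕ} (hn : 1 ≤ n) : n ≤ f n := by
  induction n, hn using Nat.le_induction with
  | base => exact hf1
  | succ n hn ih =>
    have : f n < f (n + 1) := hf hn (by omega : 1 ≤ n + 1) n.lt_succ_self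
    omega

namespace CompPair

variable {A B : ℕ → ℕ}

lemma apply_ne (h : CompPair A B) {i j : ℕ} (hi : 1 ≤ i) (hj : 1 ≤ j) : A i ≠ B j := by
  intro hij
  rcases h.2.2.2.2 (B j) (h.2.2.2.1 j hj) with ⟨_, hB⟩ | ⟨hA, _⟩
  · exact hB ⟨j, hj, rfl⟩
  · exact hA ⟨i, hi, hij⟩

lemma exists_eq_of_lt_of_lt (h : CompPair A B) {m v : ℕ} (hm : 1 ≤ m)
    (hlt : B m < v) (hgt : v < B (m + 1)) : ∃ j, 1 ≤ j ∧ A j = v := by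
  obtain ⟨-, hB, -, -, hcomp⟩ := h
  rcases hcomp v (by omega) with ⟨hA, -⟩ | ⟨-, i, hi, rfl⟩
  · exact hA
  · rcases Nat.lt_or_ge m i with hmi | him
    · exact absurd ((hB.le_iff_le (by omega : 1 ≤ m + 1) hi).2 hmi) (not_le.2 hgt)
    · exact absurd ((hB.le_iff_le hi hm).2 him) (not_le.2 hlt)

/-- `c` is the number of values of `A` in `[1, B m]`: these and `B 1, …, B m` tile `[1, B m]`. -/
lemma exists_bracket (h : CompPair A B) {m : ℕ} (hm : 1 ≤ m) :
    ∃ c, B m = m + c ∧ (∀ j, 1 ≤ j → j ≤ c → A j < B m) ∧ B m < A (c + 1) := by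
  classical
  obtain ⟨hA, hB, hA1, hB1, hcomp⟩ := h
  have hex : ∃ c, B m < A (c + 1) :=
    ⟨B m, hA.self_le_of_one_le (hA1 1 le_rfl) (by omega : 1 ≤ B m + 1)⟩
  set c := Nat.find hex
  have hc : B m < A (c + 1) := Nat.find_spec hex
  have hbelow : ∀ j, 1 ≤ j → j ≤ c → A j < B m := by
    intro j hj hjc
    have hle : A j ≤ B m := by
      simpa [Nat.sub_add_cancel hj] using Nat.find_min hex (by omega : j - 1 < c)
    exact lt_of_le_of_ne hle (apply_ne ⟨hA, hB, hA1, hB1, hcomp⟩ hj hm)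
  have hsplit : Finset.Icc 1 (B m) = (Finset.Icc 1 m).image B ∪ (Finset.Icc 1 c).image A := by
    ext v
    simp only [Finset.mem_union, Finset.mem_image, Finset.mem_Icc]
    constructor
    · rintro ⟨hv, hvm⟩
      rcases hcomp v hv with ⟨⟨j, hj, rfl⟩, -⟩ | ⟨-, i, hi, rfl⟩
      · refine Or.inr ⟨j, ⟨hj, ?_⟩, rfl⟩
        by_contra! hcj
        exact absurd ((hA.le_iff_le (by omega : 1 ≤ c + 1) hj).2 hcj) (by omega)
      · exact Or.inl ⟨i, ⟨hi, (hB.le_iff_le hi hm).1 hvm⟩, rfl⟩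
    · rintro (⟨i, ⟨hi, him⟩, rfl⟩ | ⟨j, ⟨hj, hjc⟩, rfl⟩)
      · exact ⟨hB1 i hi, (hB.le_iff_le hi hm).2 him⟩
      · exact ⟨hA1 j hj, (hbelow j hj hjc).le⟩
  have hdisj : Disjoint ((Finset.Icc 1 m).image B) ((Finset.Icc 1 c).image A) := by
    simp only [Finset.disjoint_left, Finset.mem_image, Finset.mem_Icc]
    rintro _ ⟨i, ⟨hi, -⟩, rfl⟩ ⟨j, ⟨hj, -⟩, hji⟩
    exact apply_ne ⟨hA, hB, hA1, hB1, hcomp⟩ hj hi hji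
  refine ⟨c, ?_, hbelow, hc⟩
  have hcard := congrArg Finset.card hsplit
  rwa [Nat.card_Icc, Finset.card_union_of_disjoint hdisj,
    Finset.card_image_of_injOn (hB.injOn.mono (by simp [Set.Icc_subset_Ici_self])),
    Finset.card_image_of_injOn (hA.injOn.mono (by simp [Set.Icc_subset_Ici_self])),
    Nat.card_Icc, Nat.card_Icc, Nat.add_sub_cancel, Nat.add_sub_cancel] at hcard

lemma succ_le_add_two (h : CompPair A B)
    (hA : ∀ i j, 1 ≤ i → 1 ≤ j → A i + 1 ≠ A j) {m : ℕ} (hm : 1 ≤ m) :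
    B (m + 1) ≤ B m + 2 := by
  by_contra! hgap
  obtain ⟨i, hi, hAi⟩ := h.exists_eq_of_lt_of_lt hm (by omega : B m < B m + 1) (by omega)
  obtain ⟨j, hj, hAj⟩ := h.exists_eq_of_lt_of_lt hm (by omega : B m < B m + 2) hgap
  exact hA i j hi hj (by omega)

end CompPair

namespace AntiRec

variable {A B : ℕ → ℕ}

lemma antiJacobsthal_eq (h : AntiRec 2 ![2, 1] A B) {n : ℕ} (hn : 1 ≤ n) :
    A n = 2 * B (2 * n - 1) + B (2 * n) := by
  rw [h.2 n hn, Fin.sum_univ_two]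
  simp only [Matrix.cons_val_zero, Matrix.cons_val_one, Fin.val_zero, Fin.val_one, one_mul]
  congr 3 <;> omega

lemma antiJacobsthal_add_six_le (h : AntiRec 2 ![2, 1] A B) {n : ℕ} (hn : 1 ≤ n) :
    A n + 6 ≤ A (n + 1) := by
  have hB : ∀ i, 1 ≤ i → B i < B (i + 1) := fun i hi ↦
    h.1.2.1 hi (by omega : 1 ≤ i + 1) (by omega)
  have h1 := hB (2 * n - 1) (by omega)
  have h2 : B (2 * n) < B (2 * n + 1) := hB _ (by omega)
  have h3 : B (2 * n + 1) < B (2 * n + 2) := hB _ (by omega)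
  rw [Nat.sub_add_cancel (by omega : 1 ≤ 2 * n)] at h1
  rw [h.antiJacobsthal_eq hn, h.antiJacobsthal_eq (by omega : 1 ≤ n + 1),
    show 2 * (n + 1) - 1 = 2 * n + 1 by omega, show 2 * (n + 1) = 2 * n + 2 by omega]
  omega

lemma antiJacobsthal_add_one_ne (h : AntiRec 2 ![2, 1] A B) {i j : ℕ}
    (hi : 1 ≤ i) (hj : 1 ≤ j) : A i + 1 ≠ A j := by
  have hA := h.1.1
  rcases Nat.lt_or_ge i j with hij | hji
  · have := (hA.le_iff_le (by omega : 1 ≤ i + 1) hj).2 hij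
    have := h.antiJacobsthal_add_six_le hi
    omega
  · have := (hA.le_iff_le hj hi).2 hji
    omega

lemma antiJacobsthal_gap (h : AntiRec 2 ![2, 1] A B) {n : ℕ} (hn : 1 ≤ n) :
    B (2 * n - 1) < B (2 * n) ∧ B (2 * n) ≤ B (2 * n - 1) + 2 := by
  have hsucc : 2 * n - 1 + 1 = 2 * n := by omega
  refine ⟨hsucc ▸ h.1.2.1 (by omega : 1 ≤ 2 * n - 1) (by omega : 1 ≤ 2 * n - 1 + 1)
    (by omega), ?_⟩
  have := h.1.succ_le_add_two (fun i j hi hj ↦ h.antiJacobsthal_add_one_ne hi hj)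
    (by omega : 1 ≤ 2 * n - 1)
  rwa [hsucc] at this

/-- Write `B (2n) = 2n + c` with `A c < B (2n) < A (c + 1)`; the bounds on `A` below `n`
pin `c` down to `n - 2 ≤ 3c ≤ n + 1`. If the gap `B (2n) - B (2n - 1)` is `2`, the integer
in between is some `A j` with `j ≤ c`, which improves this to `n ≤ 3c`. -/
lemma antiJacobsthal_three_mul_B_bounds (h : AntiRec 2 ![2, 1] A B) {n : ℕ} (hn : 1 ≤ n)
    (ih : ∀ j, 1 ≤ j → j < n → 7 * j ≤ A j + 4 ∧ A j + 1 ≤ 7 * j) :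
    7 * n ≤ 3 * B (2 * n) + 2 ∧ 3 * B (2 * n) ≤ 7 * n + 1 ∧
      (B (2 * n) = B (2 * n - 1) + 2 → 7 * n ≤ 3 * B (2 * n)) := by
  obtain ⟨c, hc, hbelow, habove⟩ := h.1.exists_bracket (by omega : 1 ≤ 2 * n)
  have hA := h.1.1
  have hrec := h.antiJacobsthal_eq hn
  have hB1 := h.1.2.2.2.1 (2 * n - 1) (by omega)
  have hcn : c < n := by
    by_contra! hnc
    have := hbelow n hn hnc
    omega
  have hupper : 3 * c ≤ n + 1 := by
    rcases Nat.eq_zero_or_pos c with rfl | hc1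
    · omega
    · have := (ih c hc1 hcn).1
      have := hbelow c hc1 le_rfl
      omega
  have hlower : n ≤ 3 * c + 2 := by
    rcases Nat.lt_or_ge (c + 1) n with hc1 | hc1
    · have := (ih (c + 1) (by omega) hc1).2
      omega
    · omega
  refine ⟨by omega, by omega, fun hgap ↦ ?_⟩
  obtain ⟨j, hj, hAj⟩ := h.1.exists_eq_of_lt_of_lt (by omega : 1 ≤ 2 * n - 1)
    (by omega : B (2 * n - 1) < B (2 * n - 1) + 1)
    (by rw [Nat.sub_add_cancel (by omega : 1 ≤ 2 * n)]; omega)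
  have hjc : j ≤ c := by
    by_contra! hcj
    have := (hA.le_iff_le (by omega : 1 ≤ c + 1) hj).2 hcj
    omega
  have := (ih j hj (by omega)).2
  omega

lemma antiJacobsthal_A_bounds (h : AntiRec 2 ![2, 1] A B) {n : ℕ} (hn : 1 ≤ n) :
    7 * n ≤ A n + 4 ∧ A n + 1 ≤ 7 * n := by
  induction n using Nat.strong_induction_on with
  | _ n ih =>
    obtain ⟨hlower, hupper, hgap⟩ :=
      h.antiJacobsthal_three_mul_B_bounds hn (fun j hj hjn ↦ ih j hjn hj)
    have hrec := h.antiJacobsthal_eq hn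
    have := h.antiJacobsthal_gap hn
    rcases Nat.lt_or_ge (B (2 * n - 1) + 1) (B (2 * n)) with hwide | hnarrow
    · have := hgap (by omega)
      omega
    · omega

end AntiRec

/-- For the anti-Jacobsthal numbers: B¹_n = ⌊A_n/3⌋, B²_n = A_n - 2⌊A_n/3⌋,
and 0 ≤ 3·B²_n - 7n + 2 ≤ 3. -/
theorem stmt8 (A B : ℕ → ℕ) (h : AntiRec 2 ![2, 1] A B) :
    ∀ n, 1 ≤ n →
      B (2 * n - 1) = A n / 3 ∧
      B (2 * n) = A n - 2 * (A n / 3) ∧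
      (0 ≤ 3 * (B (2 * n) : ℤ) - 7 * n + 2 ∧ 3 * (B (2 * n) : ℤ) - 7 * n + 2 ≤ 3) := by
  intro n hn
  have hrec := h.antiJacobsthal_eq hn
  have hgap := h.antiJacobsthal_gap hn
  obtain ⟨hlower, hupper, -⟩ :=
    h.antiJacobsthal_three_mul_B_bounds hn (fun j hj _ ↦ h.antiJacobsthal_A_bounds hj)
  omega
end

section
/- Let k > 2, κ = k² + 1, i = ⌊k/2⌋, and t_k = k(k+1)/2. There exists a k-uniform substitution σ on the alphabet {1,...,k} (if k is even) or {0,...,k-1} (if k is odd) with a unique fixed point ω = (i_n)_{n≥0} such that the anti-k-bonacci numbers satisfy A_n = κ(n-1) + t_k - i + i_{n-1} for all n ≥ 1. In particular, A_n - κ·n is a k-automatic sequence (shifted by a constant). -/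
/-!
Write `i = ⌊k/2⌋`, `t = k(k+1)/2` and `ω n = A (n+1) + i - (k²+1) n - t`. Complementarity shows
that `B m = m + n` as soon as `A n < m + n < A (n+1)`. For `m = kq + j` and `1 ≤ r ≤ k`, the
closed formula for `A` at smaller indices puts this threshold `n` for `B (km + r)` at `q` or
`q + 1`, the latter iff `t + ω q ≤ r + i + kj`. Summing `A (m+1) = Σ_r B (km + r)` then expresses
`ω m` through `ω q` and `j` alone, which is the substitution, and strong induction on `m`
proves the formula.
-/

open Finset

section UniformFixedPoint

variable (σ : ℕ → ℕ → ℕ) (k a : ℕ)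

/-- The fixed point of the `k`-uniform substitution `c ↦ σ c 0 ⋯ σ c (k - 1)` from the letter `a`,
computed along the base-`k` digits of the index (junk for `k < 2`). -/
def uniformFixedPoint : ℕ → ℕ
  | 0 => a
  | n + 1 =>
    if h : 2 ≤ k then σ (uniformFixedPoint ((n + 1) / k)) ((n + 1) % k) else a
decreasing_by exact Nat.div_lt_self n.succ_pos h

variable {σ k a}

@[simp]
lemma uniformFixedPoint_zero : uniformFixedPoint σ k a 0 = a := by
  rw [uniformFixedPoint]

lemma uniformFixedPoint_of_pos (hk : 2 ≤ k) {n : ℕ} (hn : 0 < n) :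
    uniformFixedPoint σ k a n = σ (uniformFixedPoint σ k a (n / k)) (n % k) := by
  obtain ⟨m, rfl⟩ := Nat.exists_eq_add_one_of_ne_zero hn.ne'
  rw [uniformFixedPoint, dif_pos hk]

lemma uniformFixedPoint_mul_add (hk : 2 ≤ k) (ha : σ a 0 = a) (n : ℕ) {j : ℕ} (hj : j < k) :
    uniformFixedPoint σ k a (k * n + j) = σ (uniformFixedPoint σ k a n) j := by
  rcases Nat.eq_zero_or_pos (k * n + j) with h0 | h0
  · obtain ⟨rfl, rfl⟩ : n = 0 ∧ j = 0 := by
      simp only [Nat.add_eq_zero_iff, Nat.mul_eq_zero] at h0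
      omega
    simp [ha]
  · rw [uniformFixedPoint_of_pos hk h0, Nat.mul_add_div (by omega), Nat.div_eq_of_lt hj,
      Nat.add_zero, Nat.mul_add_mod, Nat.mod_eq_of_lt hj]

lemma eq_uniformFixedPoint (hk : 2 ≤ k) {ω : ℕ → ℕ} (h0 : ω 0 = a)
    (hω : ∀ n j, j < k → ω (k * n + j) = σ (ω n) j) : ω = uniformFixedPoint σ k a := by
  funext n
  induction n using Nat.strong_induction_on with
  | _ n ih =>
    rcases Nat.eq_zero_or_pos n with rfl | hn
    · simp [h0]
    · rw [uniformFixedPoint_of_pos hk hn, ← ih _ (Nat.div_lt_self hn (by omega)),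
        ← hω _ _ (Nat.mod_lt _ (by omega)), Nat.div_add_mod]

lemma uniformFixedPoint_mem {S : Set ℕ} (hS : ∀ c ∈ S, ∀ j < k, σ c j ∈ S) (ha : a ∈ S)
    (n : ℕ) : uniformFixedPoint σ k a n ∈ S := by
  induction n using Nat.strong_induction_on with
  | _ n ih =>
    rcases Nat.eq_zero_or_pos n with rfl | hn
    · simpa using ha
    · by_cases hk : 2 ≤ k
      · rw [uniformFixedPoint_of_pos hk hn]
        exact hS _ (ih _ (Nat.div_lt_self hn (by omega))) _ (Nat.mod_lt _ (by omega))
      · obtain ⟨m, rfl⟩ := Nat.exists_eq_add_one_of_ne_zero hn.ne'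
        rwa [uniformFixedPoint, dif_neg hk]

end UniformFixedPoint

namespace StrictMonoOn

variable {C : ℕ → ℕ} (hC : StrictMonoOn C (Set.Ici 1))
include hC

lemma add_sub_le_of_one_le {a b : ℕ} (ha : 1 ≤ a) (hab : a ≤ b) : C a + (b - a) ≤ C b := by
  induction b, hab using Nat.le_induction with
  | base => simp
  | succ b hab ih =>
    have : C b < C (b + 1) :=
      hC (Set.mem_Ici.2 (ha.trans hab)) (Set.mem_Ici.2 (by omega)) (by omega)
    omega

lemma self_le (hC1 : 1 ≤ C 1) {p : ℕ} (hp : 1 ≤ p) : p ≤ C p := by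
  have := hC.add_sub_le_of_one_le le_rfl hp
  omega

lemma le_iff_le_card_filter (hC1 : 1 ≤ C 1) {m : ℕ} (hm : 1 ≤ m) (x : ℕ) :
    C m ≤ x ↔ m ≤ #{p ∈ Icc 1 x | C p ≤ x} := by
  constructor
  · intro hmx
    have hsub : Icc 1 m ⊆ {p ∈ Icc 1 x | C p ≤ x} := by
      intro p hp
      rw [mem_Icc] at hp
      have hpm : C p ≤ C m := hC.monotoneOn (Set.mem_Ici.2 hp.1) (Set.mem_Ici.2 hm) hp.2
      have := hC.self_le hC1 hp.1
      simp only [mem_filter, mem_Icc]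
      omega
    simpa using card_le_card hsub
  · intro hcard
    by_contra! hxm
    have hsub : {p ∈ Icc 1 x | C p ≤ x} ⊆ Icc 1 (m - 1) := by
      intro p hp
      simp only [mem_filter, mem_Icc] at hp ⊢
      by_contra! hpm
      have : C m ≤ C p := hC.monotoneOn (Set.mem_Ici.2 hm) (Set.mem_Ici.2 hp.1.1) (by omega)
      omega
    have := card_le_card hsub
    simp only [Nat.card_Icc] at this
    omega

end StrictMonoOn

namespace CompPair

variable {A B : ℕ → ℕ} (h : CompPair A B)
include h

lemma card_filter_add_card_filter (x : ℕ) :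
    #{p ∈ Icc 1 x | A p ≤ x} + #{q ∈ Icc 1 x | B q ≤ x} = x := by
  obtain ⟨hA, hB, hA1, hB1, hcomp⟩ := h
  have hinj {C : ℕ → ℕ} (hC : StrictMonoOn C (Set.Ici 1)) :
      Set.InjOn C ↑{p ∈ Icc 1 x | C p ≤ x} :=
    hC.injOn.mono fun p hp ↦ Set.mem_Ici.2 (mem_Icc.1 (mem_filter.1 hp).1).1
  have hdisj : Disjoint ({p ∈ Icc 1 x | A p ≤ x}.image A) ({q ∈ Icc 1 x | B q ≤ x}.image B) := by
    simp only [disjoint_left, mem_image, mem_filter, mem_Icc]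
    rintro v ⟨p, ⟨⟨hp, -⟩, -⟩, rfl⟩ ⟨q, ⟨⟨hq, -⟩, -⟩, hBq⟩
    rcases hcomp (A p) (hA1 p hp) with ⟨-, hBv⟩ | ⟨hAv, -⟩
    · exact hBv ⟨q, hq, hBq⟩
    · exact hAv ⟨p, hp, rfl⟩
  have hunion : {p ∈ Icc 1 x | A p ≤ x}.image A ∪ {q ∈ Icc 1 x | B q ≤ x}.image B
      = Icc 1 x := by
    ext v
    simp only [mem_union, mem_image, mem_filter, mem_Icc]
    constructor
    · rintro (⟨p, ⟨⟨hp, -⟩, hpx⟩, rfl⟩ | ⟨q, ⟨⟨hq, -⟩, hqx⟩, rfl⟩)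
      exacts [⟨hA1 p hp, hpx⟩, ⟨hB1 q hq, hqx⟩]
    · rintro ⟨hv, hvx⟩
      rcases hcomp v hv with ⟨⟨n, hn, rfl⟩, -⟩ | ⟨-, ⟨n, hn, rfl⟩⟩
      · exact .inl ⟨n, ⟨⟨hn, (hA.self_le (hA1 1 le_rfl) hn).trans hvx⟩, hvx⟩, rfl⟩
      · exact .inr ⟨n, ⟨⟨hn, (hB.self_le (hB1 1 le_rfl) hn).trans hvx⟩, hvx⟩, rfl⟩
  rw [← card_image_of_injOn (hinj hA), ← card_image_of_injOn (hinj hB),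
    ← card_union_of_disjoint hdisj, hunion, Nat.card_Icc, Nat.add_sub_cancel]

lemma B_eq_add {m n : ℕ} (hm : 1 ≤ m) (hAn : 1 ≤ n → A n < m + n)
    (hAn1 : m + n < A (n + 1)) : B m = m + n := by
  have hpart := h.card_filter_add_card_filter (m + n)
  obtain ⟨hA, hB, hA1, hB1, hcomp⟩ := h
  have hAcard : #{p ∈ Icc 1 (m + n) | A p ≤ m + n} = n := by
    apply le_antisymm
    · by_contra! hlt
      have := (hA.le_iff_le_card_filter (hA1 1 le_rfl) (m := n + 1) (by omega) _).2 hlt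
      omega
    · rcases Nat.eq_zero_or_pos n with rfl | hn
      · exact Nat.zero_le _
      · exact (hA.le_iff_le_card_filter (hA1 1 le_rfl) hn _).1 (hAn hn).le
  have hBcard : #{q ∈ Icc 1 (m + n) | B q ≤ m + n} = m := by omega
  have hBm : B m ≤ m + n := (hB.le_iff_le_card_filter (hB1 1 le_rfl) hm _).2 hBcard.ge
  have hnotA : ¬∃ p, 1 ≤ p ∧ A p = m + n := by
    rintro ⟨p, hp, hAp⟩
    rcases le_or_gt p n with hpn | hpn
    · have : A p ≤ A n := hA.monotoneOn (Set.mem_Ici.2 hp) (Set.mem_Ici.2 (by omega)) hpn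
      have := hAn (by omega)
      omega
    · have : A (n + 1) ≤ A p := hA.monotoneOn (Set.mem_Ici.2 (by omega)) (Set.mem_Ici.2 hp) hpn
      omega
  obtain ⟨q, hq, hBq⟩ : ∃ q, 1 ≤ q ∧ B q = m + n := by
    rcases hcomp (m + n) (by omega) with ⟨hAv, -⟩ | ⟨-, hBv⟩
    · exact absurd hAv hnotA
    · exact hBv
  have hqm : q ≤ m := hBcard ▸ (hB.le_iff_le_card_filter (hB1 1 le_rfl) hq _).1 hBq.le
  have hmq : m ≤ q := (hB.le_iff_le (Set.mem_Ici.2 hm) (Set.mem_Ici.2 hq)).1 (hBq ▸ hBm)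
  rw [← hBq, le_antisymm hmq hqm]

end CompPair

lemma two_mul_triangle (k : ℕ) : 2 * (k * (k + 1) / 2) = k * k + k := by
  rw [Nat.two_mul_div_two_of_even (Nat.even_mul_succ_self k)]
  ring

lemma sum_range_add_one (k : ℕ) : ∑ x ∈ range k, (x + 1) = k * (k + 1) / 2 := by
  have := sum_range_succ' (fun x ↦ x) k
  rw [sum_range_id, Nat.add_sub_cancel, mul_comm] at this
  simpa using this.symm

def antiBonacciAlphabet (k : ℕ) : Finset ℕ :=
  if k % 2 = 0 then Icc 1 k else Icc 0 (k - 1)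

-- The letter `ω (kq + j)` when `ω q = c`; the filter counts the `r = x + 1` with threshold `q + 1`.
def antiBonacciSubst (k c j : ℕ) : ℕ :=
  k / 2 + #{x ∈ range k | k * (k + 1) / 2 + c ≤ x + 1 + (k / 2 + k * j)} - j

lemma card_filter_range_le_add (k a b : ℕ) :
    #{x ∈ range k | a ≤ x + 1 + b} = k - min k (a - (b + 1)) := by
  have : {x ∈ range k | a ≤ x + 1 + b} = Ico (min k (a - (b + 1))) k := by
    ext x
    simp only [mem_filter, mem_range, mem_Ico]
    omega
  rw [this, Nat.card_Ico]

lemma antiBonacciSubst_zero (hk : 2 < k) (c : ℕ) : antiBonacciSubst k c 0 = k / 2 := by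
  have := two_mul_triangle k
  have : 3 * k ≤ k * k := Nat.mul_le_mul_right k hk
  rw [antiBonacciSubst, card_filter_range_le_add]
  omega

lemma antiBonacciSubst_mem_and_add_eq (hk : 2 < k) {c j : ℕ} (hc : c ∈ antiBonacciAlphabet k)
    (hj : j < k) :
    antiBonacciSubst k c j ∈ antiBonacciAlphabet k ∧
      antiBonacciSubst k c j + j
        = k / 2 + #{x ∈ range k | k * (k + 1) / 2 + c ≤ x + 1 + (k / 2 + k * j)} := by
  have ht := two_mul_triangle k
  rw [antiBonacciSubst, card_filter_range_le_add]
  -- the filter is empty for `j < k / 2`, full for `j > k / 2`, and depends on `c` only in between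
  rcases Nat.even_or_odd' k with ⟨s, rfl | rfl⟩
  · have : 2 * s * (2 * s) = 4 * (s * s) := by ring
    have : 2 * s * j = 2 * (s * j) := by ring
    simp only [antiBonacciAlphabet, (by omega : 2 * s % 2 = 0), if_true, mem_Icc] at hc ⊢
    rcases lt_trichotomy j s with h | rfl | h
    · have : s * j + s ≤ s * s := by nlinarith
      omega
    · omega
    · have : s * s + s ≤ s * j := by nlinarith
      omega
  · have : (2 * s + 1) * (2 * s + 1) = 4 * (s * s) + 4 * s + 1 := by ring
    have : (2 * s + 1) * j = 2 * (s * j) + j := by ring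
    simp only [antiBonacciAlphabet, (by omega : (2 * s + 1) % 2 = 1), if_false, mem_Icc,
      Nat.one_ne_zero] at hc ⊢
    rcases lt_trichotomy j s with h | rfl | h
    · have : s * j + s ≤ s * s := by nlinarith
      omega
    · omega
    · have : s * s + s ≤ s * j := by nlinarith
      omega

def antiBonacciWord (k : ℕ) : ℕ → ℕ :=
  uniformFixedPoint (antiBonacciSubst k) k (k / 2)

section AntiBonacciWord

variable {k : ℕ} (hk : 2 < k)
include hk

lemma half_mem_antiBonacciAlphabet : k / 2 ∈ antiBonacciAlphabet k := by
  unfold antiBonacciAlphabet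
  split_ifs <;> simp only [mem_Icc] <;> omega

lemma antiBonacciWord_mem (n : ℕ) : antiBonacciWord k n ∈ antiBonacciAlphabet k :=
  uniformFixedPoint_mem (S := ↑(antiBonacciAlphabet k))
    (fun _ hc _ hj ↦ (antiBonacciSubst_mem_and_add_eq hk hc hj).1)
    (half_mem_antiBonacciAlphabet hk) n

lemma antiBonacciWord_le (n : ℕ) : antiBonacciWord k n ≤ k := by
  have := antiBonacciWord_mem hk n
  unfold antiBonacciAlphabet at this
  split_ifs at this <;> simp only [mem_Icc] at this <;> omega

lemma antiBonacciWord_mul_add (n : ℕ) {j : ℕ} (hj : j < k) :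
    antiBonacciWord k (k * n + j) = antiBonacciSubst k (antiBonacciWord k n) j :=
  uniformFixedPoint_mul_add hk.le (antiBonacciSubst_zero hk _) n hj

end AntiBonacciWord

namespace AntiRec

variable {k : ℕ} {A B : ℕ → ℕ} (h : AntiRec k (fun _ ↦ 1) A B)
include h

lemma A_succ_eq_sum (m : ℕ) : A (m + 1) = ∑ x ∈ range k, B (k * m + (x + 1)) := by
  rw [h.2 (m + 1) (by omega), ← Fin.sum_univ_eq_sum_range (fun x ↦ B (k * m + (x + 1)))]
  refine sum_congr rfl fun j _ ↦ ?_
  rw [one_mul, Nat.add_sub_cancel, mul_comm, add_assoc]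

lemma le_A_succ (m : ℕ) : k * k * m + k * (k + 1) / 2 ≤ A (m + 1) := by
  obtain ⟨-, hB, -, hB1, -⟩ := h.1
  calc k * k * m + k * (k + 1) / 2 = ∑ x ∈ range k, (k * m + (x + 1)) := by
        rw [sum_add_distrib, sum_const, card_range, smul_eq_mul, sum_range_add_one, mul_assoc]
    _ ≤ ∑ x ∈ range k, B (k * m + (x + 1)) :=
        sum_le_sum fun x _ ↦ hB.self_le (hB1 1 le_rfl) (by omega)
    _ = A (m + 1) := (h.A_succ_eq_sum m).symm

lemma B_mul_add_eq (hk : 2 < k) {ω : ℕ → ℕ} (hω : ∀ p, ω p ≤ k) {m q j : ℕ}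
    (hm : k * q + j = m) (hj : j < k) (hm1 : 1 ≤ m)
    (ih : ∀ p < m, A (p + 1) + k / 2 = (k * k + 1) * p + k * (k + 1) / 2 + ω p)
    {r : ℕ} (hr : 1 ≤ r) (hrk : r ≤ k) :
    B (k * m + r) = k * m + r + q
      + if k * (k + 1) / 2 + ω q ≤ r + (k / 2 + k * j) then 1 else 0 := by
  have ht := two_mul_triangle k
  have h3k : 3 * k ≤ k * k := Nat.mul_le_mul_right k hk
  have hkm : k * m = k * k * q + k * j := by rw [← hm]; ring
  have hkj : k * j + k ≤ k * k := by nlinarith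
  have hqm : q < m := by nlinarith
  have ihq := ih q hqm
  have : (k * k + 1) * q = k * k * q + q := by ring
  split_ifs with hcond
  · refine (h.1.B_eq_add (m := k * m + r) (n := q + 1) (by omega) (fun _ ↦ by omega) ?_).trans
      (by ring)
    rcases (show q + 1 ≤ m by omega).lt_or_eq with hlt | heq
    · have := ih (q + 1) hlt
      have : (k * k + 1) * (q + 1) = k * k * q + k * k + q + 1 := by ring
      omega
    · -- `q + 1 = m`: the formula for `A (m + 1)` is not available yet, the crude bound suffices
      rw [heq]
      have := h.le_A_succ m
      have : 3 * (k * m) ≤ k * k * m := by nlinarith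
      have : m ≤ k * m := Nat.le_mul_of_pos_left m (by omega)
      omega
  · refine (h.1.B_eq_add (m := k * m + r) (n := q) (by omega) (fun hq ↦ ?_) (by omega)).trans
      (by ring)
    obtain ⟨q', rfl⟩ := Nat.exists_eq_add_one_of_ne_zero (by omega : q ≠ 0)
    have := ih q' (by omega)
    have := hω q'
    have : (k * k + 1) * q' = k * k * q' + q' := by ring
    have : k * k * (q' + 1) = k * k * q' + k * k := by ring
    omega

lemma A_succ_add_half (hk : 2 < k) (m : ℕ) :
    A (m + 1) + k / 2 = (k * k + 1) * m + k * (k + 1) / 2 + antiBonacciWord k m := by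
  have ht := two_mul_triangle k
  have h3k : 3 * k ≤ k * k := Nat.mul_le_mul_right k hk
  induction m using Nat.strong_induction_on with
  | _ m ih =>
  rcases Nat.eq_zero_or_pos m with rfl | hm
  · have hB : ∀ x ∈ range k, B (k * 0 + (x + 1)) = x + 1 := fun x hx ↦ by
      have := h.le_A_succ 0
      have := mem_range.1 hx
      rw [Nat.mul_zero, Nat.zero_add]
      exact h.1.B_eq_add (n := 0) (by omega) (by omega) (by omega)
    rw [h.A_succ_eq_sum, sum_congr rfl hB, sum_range_add_one, antiBonacciWord,
      uniformFixedPoint_zero]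
    ring
  · have hj : m % k < k := Nat.mod_lt m (by omega)
    have hqj : k * (m / k) + m % k = m := Nat.div_add_mod m k
    have hB : ∀ x ∈ range k, B (k * m + (x + 1)) = _ := fun x hx ↦
      h.B_mul_add_eq hk (antiBonacciWord_le hk) hqj hj hm ih (r := x + 1) (by omega)
        (by have := mem_range.1 hx; omega)
    have hword := antiBonacciWord_mul_add hk (m / k) hj
    rw [hqj] at hword
    have hsubst := (antiBonacciSubst_mem_and_add_eq hk (antiBonacciWord_mem hk (m / k)) hj).2
    rw [← hword] at hsubst
    rw [h.A_succ_eq_sum, sum_congr rfl hB, sum_add_distrib, sum_add_distrib, sum_add_distrib, sum_range_add_one, sum_boole]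
    simp only [sum_const, card_range, smul_eq_mul, Nat.cast_id]
    have : (k * k + 1) * m = k * (k * m) + m := by ring
    omega

end AntiRec

/-- There is a k-uniform substitution σ on {1,…,k} (k even) or {0,…,k-1} (k odd),
with unique fixed point ω starting from the letter i = ⌊k/2⌋ (all substituted words
have initial digit i), such that A n = κ(n-1) + t_k - i + ω(n-1). -/
theorem stmt11 (k : ℕ) (hk : 2 < k) (A B : ℕ → ℕ)
    (h : AntiRec k (fun _ => 1) A B) :
    ∃ (σ : ℕ → Fin k → ℕ) (ω : ℕ → ℕ),
      (∀ c ∈ (if k % 2 = 0 then Finset.Icc 1 k else Finset.Icc 0 (k - 1)),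
        ∀ j : Fin k, σ c j ∈ (if k % 2 = 0 then Finset.Icc 1 k else Finset.Icc 0 (k - 1))) ∧
      -- every substituted word has initial digit i = ⌊k/2⌋
      (∀ c ∈ (if k % 2 = 0 then Finset.Icc 1 k else Finset.Icc 0 (k - 1)),
        σ c ⟨0, by omega⟩ = k / 2) ∧
      -- ω is the fixed point of σ starting from the letter i = ⌊k/2⌋
      ω 0 = k / 2 ∧
      (∀ n : ℕ, ∀ j : Fin k, ω (k * n + (j : ℕ)) = σ (ω n) j) ∧
      -- the fixed point is unique
      (∀ ω' : ℕ → ℕ, ω' 0 = k / 2 →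
        (∀ n : ℕ, ∀ j : Fin k, ω' (k * n + (j : ℕ)) = σ (ω' n) j) → ω' = ω) ∧
      -- the formula for the anti-k-bonacci numbers
      (∀ n, 1 ≤ n →
        (A n : ℤ) = (k ^ 2 + 1) * ((n : ℤ) - 1) + (k * (k + 1) / 2 : ℕ) - (k / 2 : ℕ)
          + ω (n - 1)) := by
  refine ⟨fun c j ↦ antiBonacciSubst k c j, antiBonacciWord k,
    fun c hc j ↦ (antiBonacciSubst_mem_and_add_eq hk hc j.isLt).1,
    fun c _ ↦ antiBonacciSubst_zero hk c, uniformFixedPoint_zero,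
    fun n j ↦ antiBonacciWord_mul_add hk n j.isLt,
    fun ω' h0 hω' ↦ eq_uniformFixedPoint hk.le h0 fun n j hj ↦ hω' n ⟨j, hj⟩, ?_⟩
  intro n hn
  obtain ⟨m, rfl⟩ := Nat.exists_eq_add_one_of_ne_zero (by omega : n ≠ 0)
  have := congrArg (Nat.cast : ℕ → ℤ) (h.A_succ_add_half hk m)
  rw [Nat.add_sub_cancel]
  push_cast at this ⊢
  linear_combination this
end

section
/- Let a = (a_1,...,a_k) be a positive integer vector of dimension k > 1 with trace τ, and suppose a is A_1-bounded, i.e., A_1 = Σ j·a_j ≤ (k-1)τ + 2. With κ = kτ + 1, the anti-recurrence sequence satisfies (n-1)κ + 1 ≤ A_n ≤ nκ for all n ≥ 1, i.e., A_n lies in the interval I_n = [κ(n-1)+1, κn]. -/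
open Finset

section helpers
-- (helpers pasted here)


lemma mono_gap (f : ℕ → ℕ) (hf : StrictMonoOn f (Set.Ici 1)) (i d : ℕ) (hi : 1 ≤ i) :
    f i + d ≤ f (i + d) := by
  induction d with
  | zero => simp
  | succ d ih =>
    have h1 : f (i + d) < f (i + d + 1) :=
      hf (Set.mem_Ici.mpr (by omega)) (Set.mem_Ici.mpr (by omega)) (by omega)
    have h2 : i + (d + 1) = i + d + 1 := by omega
    rw [h2]
    omega

lemma id_le (f : ℕ → ℕ) (hf : StrictMonoOn f (Set.Ici 1)) (h1 : 1 ≤ f 1)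
    (i : ℕ) (hi : 1 ≤ i) : i ≤ f i := by
  have := mono_gap f hf 1 (i - 1) le_rfl
  have h2 : 1 + (i - 1) = i := by omega
  rw [h2] at this
  omega

lemma mono_le (f : ℕ → ℕ) (hf : StrictMonoOn f (Set.Ici 1)) {i j : ℕ}
    (hi : 1 ≤ i) (hij : i ≤ j) : f i ≤ f j :=
  hf.monotoneOn (Set.mem_Ici.mpr hi) (Set.mem_Ici.mpr (by omega)) hij

lemma lt_index (f : ℕ → ℕ) (hf : StrictMonoOn f (Set.Ici 1)) {i j : ℕ}
    (hi : 1 ≤ i) (hj : 1 ≤ j) (h : f i < f j) : i < j := by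
  by_contra h'
  push_neg at h'
  have := mono_le f hf hj h'
  omega

lemma countB (A B : ℕ → ℕ) (h : CompPair A B) (m N : ℕ) (hm : 1 ≤ m)
    (hN : ∀ i, 1 ≤ i → A i < B m → i ≤ N) :
    B m = m + ((Icc 1 N).filter fun i => A i < B m).card := by
  classical
  obtain ⟨hA, hB, hA1, hB1, hcov⟩ := h
  have hM1 : 1 ≤ B m := hB1 m hm
  set M := B m with hM
  -- the two value-sets
  set FB := (Icc 1 M).filter (fun x => ∃ i, 1 ≤ i ∧ B i = x) with hFB
  set FA := (Icc 1 M).filter (fun x => ∃ i, 1 ≤ i ∧ A i = x) with hFA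
  have hunion : Icc 1 M = FB ∪ FA := by
    apply Finset.Subset.antisymm
    · intro x hx
      have hx1 : 1 ≤ x ∧ x ≤ M := by simpa [mem_Icc] using hx
      rcases hcov x hx1.1 with ⟨hA', hB'⟩ | ⟨hA', hB'⟩
      · exact mem_union_right _ (mem_filter.mpr ⟨hx, hA'⟩)
      · exact mem_union_left _ (mem_filter.mpr ⟨hx, hB'⟩)
    · intro x hx
      rcases mem_union.mp hx with h' | h'
      · exact (mem_filter.mp h').1
      · exact (mem_filter.mp h').1
  have hdisj : Disjoint FB FA := by
    rw [Finset.disjoint_left]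
    intro x hxB hxA
    obtain ⟨hx, hexB⟩ := mem_filter.mp hxB
    obtain ⟨_, hexA⟩ := mem_filter.mp hxA
    have hx1 : 1 ≤ x := (mem_Icc.mp hx).1
    rcases hcov x hx1 with ⟨_, hB'⟩ | ⟨hA', _⟩
    · exact hB' hexB
    · exact hA' hexA
  have hcards : M = FB.card + FA.card := by
    have := congrArg Finset.card hunion
    rw [Finset.card_union_of_disjoint hdisj] at this
    simpa [Nat.card_Icc] using this
  -- FB is the image of B on [1, m]
  have hFBim : FB = (Icc 1 m).image B := by
    apply Finset.Subset.antisymm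
    · intro x hx
      obtain ⟨hx', i, hi1, hie⟩ := mem_filter.mp hx
      have hxM : x ≤ M := (mem_Icc.mp hx').2
      have him : i ≤ m := by
        by_contra hc
        push_neg at hc
        have : B m < B i := hB (Set.mem_Ici.mpr hm) (Set.mem_Ici.mpr (by omega)) hc
        omega
      exact mem_image.mpr ⟨i, mem_Icc.mpr ⟨hi1, him⟩, hie⟩
    · intro x hx
      obtain ⟨i, hi, hie⟩ := mem_image.mp hx
      obtain ⟨hi1, him⟩ := mem_Icc.mp hi
      have h1 : 1 ≤ B i := hB1 i hi1
      have h2 : B i ≤ B m := mono_le B hB hi1 him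
      exact mem_filter.mpr ⟨mem_Icc.mpr ⟨by omega, by omega⟩, i, hi1, hie⟩
  have hFBcard : FB.card = m := by
    rw [hFBim, Finset.card_image_of_injOn, Nat.card_Icc]
    · omega
    · intro x hx y hy hxy
      obtain ⟨hx1, _⟩ := mem_Icc.mp hx
      obtain ⟨hy1, _⟩ := mem_Icc.mp hy
      by_contra hne
      rcases Nat.lt_or_ge x y with h' | h'
      · have := hB (Set.mem_Ici.mpr hx1) (Set.mem_Ici.mpr hy1) h'
        omega
      · have h'' : y < x := by omega
        have := hB (Set.mem_Ici.mpr hy1) (Set.mem_Ici.mpr hx1) h''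
        omega
  -- FA is the image of A on the index filter
  have hMnotA : ¬(∃ i, 1 ≤ i ∧ A i = M) := by
    rcases hcov M hM1 with ⟨_, hB'⟩ | ⟨hA', _⟩
    · exact absurd ⟨m, hm, rfl⟩ hB'
    · exact hA'
  have hFAim : FA = ((Icc 1 N).filter fun i => A i < M).image A := by
    apply Finset.Subset.antisymm
    · intro x hx
      obtain ⟨hx', i, hi1, hie⟩ := mem_filter.mp hx
      have hxM : x ≤ M := (mem_Icc.mp hx').2
      have hxlt : x < M := by
        rcases Nat.lt_or_ge x M with h' | h'
        · exact h'
        · exfalso; exact hMnotA ⟨i, hi1, by omega⟩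
      have hiN : i ≤ N := hN i hi1 (by omega)
      exact mem_image.mpr ⟨i, mem_filter.mpr ⟨mem_Icc.mpr ⟨hi1, hiN⟩, by omega⟩, hie⟩
    · intro x hx
      obtain ⟨i, hi, hie⟩ := mem_image.mp hx
      obtain ⟨hi', hilt⟩ := mem_filter.mp hi
      obtain ⟨hi1, hiN⟩ := mem_Icc.mp hi'
      have h1 : 1 ≤ A i := hA1 i hi1
      exact mem_filter.mpr ⟨mem_Icc.mpr ⟨by omega, by omega⟩, i, hi1, hie⟩
  have hFAcard : FA.card = ((Icc 1 N).filter fun i => A i < M).card := by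
    rw [hFAim]
    apply Finset.card_image_of_injOn
    intro x hx y hy hxy
    obtain ⟨hx', _⟩ := mem_filter.mp hx
    obtain ⟨hy', _⟩ := mem_filter.mp hy
    have hx1 : 1 ≤ x := (mem_Icc.mp hx').1
    have hy1 : 1 ≤ y := (mem_Icc.mp hy').1
    by_contra hne
    rcases Nat.lt_or_ge x y with h' | h'
    · have := hA (Set.mem_Ici.mpr hx1) (Set.mem_Ici.mpr hy1) h'
      omega
    · have h'' : y < x := by omega
      have := hA (Set.mem_Ici.mpr hy1) (Set.mem_Ici.mpr hx1) h''
      omega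
  omega

lemma dc_card (A : ℕ → ℕ) (hA : StrictMonoOn A (Set.Ici 1)) (N M : ℕ)
    (hpos : 1 ≤ ((Icc 1 N).filter fun i => A i < M).card) :
    1 ≤ ((Icc 1 N).filter fun i => A i < M).card ∧
    ((Icc 1 N).filter fun i => A i < M).card ≤ N ∧
    A (((Icc 1 N).filter fun i => A i < M).card) < M := by
  classical
  set S := (Icc 1 N).filter fun i => A i < M with hS
  have hne : S.Nonempty := card_pos.mp (by omega)
  set s := S.max' hne with hs
  have hsS : s ∈ S := S.max'_mem hne
  obtain ⟨hs', hsM⟩ := mem_filter.mp hsS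
  obtain ⟨hs1, hsN⟩ := mem_Icc.mp hs'
  have hsub : S = Icc 1 s := by
    apply Finset.Subset.antisymm
    · intro x hx
      obtain ⟨hx', _⟩ := mem_filter.mp hx
      exact mem_Icc.mpr ⟨(mem_Icc.mp hx').1, S.le_max' x hx⟩
    · intro x hx
      obtain ⟨hx1, hxs⟩ := mem_Icc.mp hx
      have : A x ≤ A s := mono_le A hA hx1 hxs
      exact mem_filter.mpr ⟨mem_Icc.mpr ⟨hx1, by omega⟩, by omega⟩
  have hcard : S.card = s := by rw [hsub, Nat.card_Icc]; omega
  rw [hcard]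
  exact ⟨by omega, hsN, hsM⟩

end helpers


lemma arithKey (K W E : ℤ) (hK : 2 ≤ K) (hW : K ≤ W) (hDk : K - 1 ≤ E)
    (hDub : E + (K - 1) ≤ (K - 1) * W) (hDbdd : E + W ≤ (K - 1) * W + 2) :
    E * ((K - 1) * W + 1) ≤ K * (K - 2) * W ^ 2 + 2 * K * W - W - 1 := by
  rcases eq_or_lt_of_le hK with heq | hK3
  · have hKeq : K = 2 := heq.symm
    subst hKeq
    have hE2 : E ≤ 2 := by linarith
    have hEW : E + 1 ≤ W := by linarith
    have hE0 : 1 ≤ E := by linarith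
    rcases le_or_gt E 1 with h1 | h1
    · nlinarith
    · have hE : E = 2 := by omega
      subst hE
      nlinarith
  · have hK3' : (3 : ℤ) ≤ K := by omega
    have hW3 : (3 : ℤ) ≤ W := by linarith
    have hDub2 : E ≤ (K - 2) * W + 2 := by linarith
    have hpos : (0 : ℤ) ≤ (K - 1) * W + 1 := by nlinarith
    have hmm := mul_le_mul_of_nonneg_right hDub2 hpos
    nlinarith [hmm, mul_nonneg (by linarith : (0:ℤ) ≤ K - 3) (by nlinarith : (0:ℤ) ≤ W * W - W),
      mul_nonneg (by linarith : (0:ℤ) ≤ W - 3) (by linarith : (0:ℤ) ≤ W)]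

lemma arithMain (K W E R t Q : ℤ) (hK : 2 ≤ K) (hW : K ≤ W) (hDk : K - 1 ≤ E)
    (hDub : E + (K - 1) ≤ (K - 1) * W) (hDbdd : E + W ≤ (K - 1) * W + 2)
    (hR : 0 ≤ R) (ht0 : 0 ≤ t) (hQ : 0 ≤ Q) (htW : t ≤ W)
    (hmain : K * W * R + E * t ≤ ((Q + 1) * K + 1) * t + E) :
    ((Q + 1) * K + 1) * W + E + (R + t) ≤ (Q + 2) * (K * W + 1) := by
  have hKEY := arithKey K W E hK hW hDk hDub hDbdd
  have hEKW : E ≤ K * W := by nlinarith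
  have hKW1 : (1 : ℤ) ≤ K * W := by nlinarith
  have hco : (0 : ℤ) ≤ (Q + 1) * K + 1 + K * W - E := by
    nlinarith [mul_nonneg (by linarith : (0:ℤ) ≤ Q + 1) (by linarith : (0:ℤ) ≤ K)]
  have hc4 := mul_nonneg hco (by linarith : (0 : ℤ) ≤ W - t)
  have hsuff : K * W * (R + t + E) ≤ K * W * ((K - 1) * W + Q + 2) + (K * W - 1) := by
    nlinarith [hmain, hc4, hKEY]
  have hfin : R + t + E ≤ (K - 1) * W + Q + 2 := by
    by_contra hcon
    push_neg at hcon
    have h1 : (K - 1) * W + Q + 2 + 1 ≤ R + t + E := hcon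
    have h2 := mul_le_mul_of_nonneg_left h1 (by linarith : (0 : ℤ) ≤ K * W)
    nlinarith [hsuff]
  nlinarith [hfin]

/-- If the linear form is A₁-bounded, then A n lies in the interval
I_n = [κ(n-1)+1, κn] with κ = kτ + 1. -/
theorem stmt13 (k : ℕ) (hk : 1 < k) (a : Fin k → ℕ) (ha : ∀ j, 0 < a j)
    (A B : ℕ → ℕ) (h : AntiRec k a A B)
    (hbdd : (∑ j : Fin k, ((j : ℕ) + 1) * a j) ≤ (k - 1) * (∑ j : Fin k, a j) + 2) :
    ∀ n, 1 ≤ n →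
      (n - 1) * (k * (∑ j : Fin k, a j) + 1) + 1 ≤ A n ∧
      A n ≤ n * (k * (∑ j : Fin k, a j) + 1) := by
  classical
  obtain ⟨hcomp, hrec⟩ := h
  obtain ⟨hA, hB, hA1, hB1, hcov⟩ := id hcomp
  set τ : ℕ := ∑ j : Fin k, a j with hτdef
  set D : ℕ := ∑ j : Fin k, (j : ℕ) * a j with hDdef
  have hS : (∑ j : Fin k, ((j : ℕ) + 1) * a j) = D + τ := by
    rw [hDdef, hτdef, ← Finset.sum_add_distrib]
    exact Finset.sum_congr rfl (fun j _ => by ring)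
  have hτk : k ≤ τ := by
    have h1 := Finset.card_nsmul_le_sum Finset.univ a 1 (fun j _ => ha j)
    simpa using h1
  have hDk : k - 1 ≤ D := by
    have hlt : k - 1 < k := by omega
    have h1 := Finset.single_le_sum (f := fun j : Fin k => (j : ℕ) * a j)
      (fun j _ => Nat.zero_le _) (Finset.mem_univ (⟨k - 1, hlt⟩ : Fin k))
    have h2 : k - 1 ≤ (k - 1) * a ⟨k - 1, hlt⟩ :=
      Nat.le_mul_of_pos_right _ (ha _)
    calc k - 1 ≤ (k-1) * a ⟨k-1, hlt⟩ := h2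
      _ ≤ D := h1
  have hDub : D + (k - 1) ≤ (k - 1) * τ := by
    have h1 : (k - 1) * τ = ∑ j : Fin k, (k - 1) * a j := by
      rw [hτdef, Finset.mul_sum]
    have h2 : ∀ j : Fin k, (k - 1) * a j = (j : ℕ) * a j + (k - 1 - (j : ℕ)) * a j := by
      intro j
      have hj : (j : ℕ) ≤ k - 1 := by have := j.isLt; omega
      rw [← Nat.add_mul]
      congr 1
      omega
    have h3 : (k - 1) * τ = D + ∑ j : Fin k, (k - 1 - (j : ℕ)) * a j := by
      rw [h1, hDdef, ← Finset.sum_add_distrib]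
      exact Finset.sum_congr rfl (fun j _ => h2 j)
    have hk0 : (0 : ℕ) < k := by omega
    have h45 : k - 1 ≤ ∑ j : Fin k, (k - 1 - (j : ℕ)) * a j := by
      calc k - 1 ≤ (k - 1 - ((⟨0, hk0⟩ : Fin k) : ℕ)) * a ⟨0, hk0⟩ := by
            simp only [Fin.val_mk, Nat.sub_zero]
            exact Nat.le_mul_of_pos_right _ (ha _)
        _ ≤ ∑ j : Fin k, (k - 1 - (j : ℕ)) * a j :=
            Finset.single_le_sum (f := fun j : Fin k => (k - 1 - (j : ℕ)) * a j)
              (fun j _ => Nat.zero_le _) (Finset.mem_univ _)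
    omega
  have hDbdd : D + τ ≤ (k - 1) * τ + 2 := by rw [← hS]; exact hbdd
  clear_value τ D
  have hAgid : ∀ i, 1 ≤ i → i ≤ A i := id_le A hA (hA1 1 le_rfl)
  have hBgid : ∀ i, 1 ≤ i → i ≤ B i := id_le B hB (hB1 1 le_rfl)
  -- the main strengthened induction
  have main : ∀ n, 1 ≤ n → ((n - 1) * (k * τ + 1) + D ≤ A n ∧ A n ≤ n * (k * τ + 1)) := by
    intro n
    induction n using Nat.strong_induction_on with
    | _ n IH =>
      intro hn1
      rcases Nat.lt_or_ge n 2 with hn2 | hn2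
      · -- base case n = 1
        have hn : n = 1 := by omega
        subst hn
        have hrec1 := hrec 1 le_rfl
        have hA1lb : D + τ ≤ A 1 := by
          rw [hrec1]
          have hstep : ∀ j : Fin k, ((j : ℕ) + 1) * a j ≤ a j * B ((1 - 1) * k + (j : ℕ) + 1) := by
            intro j
            have h1 : (j : ℕ) + 1 ≤ B ((1 - 1) * k + (j : ℕ) + 1) := by
              have := hBgid ((1 - 1) * k + (j : ℕ) + 1) (by omega)
              omega
            calc ((j : ℕ) + 1) * a j = a j * ((j : ℕ) + 1) := by ring
              _ ≤ a j * B ((1 - 1) * k + (j : ℕ) + 1) := Nat.mul_le_mul_left _ h1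
          calc D + τ = ∑ j : Fin k, ((j : ℕ) + 1) * a j := hS.symm
            _ ≤ ∑ j : Fin k, a j * B ((1 - 1) * k + (j : ℕ) + 1) :=
                Finset.sum_le_sum (fun j _ => hstep j)
        have hBid : ∀ i, 1 ≤ i → i ≤ k → B i = i := by
          intro i hi1 hik
          have hident := countB A B hcomp i (B i) hi1
            (fun t ht1 htlt => ((hAgid t ht1).trans_lt htlt).le)
          rcases Nat.eq_zero_or_pos (((Icc 1 (B i)).filter fun t => A t < B i).card) with hc | hc
          · omega
          · exfalso
            obtain ⟨hc1, hcN, hcA⟩ := dc_card A hA (B i) (B i) hc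
            set c := ((Icc 1 (B i)).filter fun t => A t < B i).card with hcdef
            have hgap : A 1 + (c - 1) ≤ A c := by
              have := mono_gap A hA 1 (c - 1) le_rfl
              have he : 1 + (c - 1) = c := by omega
              rwa [he] at this
            have : D + τ ≤ i := by omega
            omega
        have hA1eq : A 1 = D + τ := by
          rw [hrec1, ← hS]
          apply Finset.sum_congr rfl
          intro j _
          have hjk : (1 - 1) * k + (j : ℕ) + 1 ≤ k := by
            have := j.isLt; omega
          rw [hBid _ (by omega) hjk]
          have he : (1 - 1) * k + (j : ℕ) + 1 = (j : ℕ) + 1 := by omega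
          rw [he]; ring
        have hkτ : (k - 1) * τ + τ = k * τ := by
          have hh : k - 1 + 1 = k := by omega
          calc (k - 1) * τ + τ = (k - 1 + 1) * τ := by ring
            _ = k * τ := by rw [hh]
        constructor
        · omega
        · have : A 1 ≤ k * τ + 1 := by omega
          omega
      · -- step case
        obtain ⟨q, rfl⟩ : ∃ q, n = q + 2 := ⟨n - 2, by omega⟩
        have h21 : q + 2 - 1 = q + 1 := by omega
        have hrecn := hrec (q + 2) (by omega)
        rw [h21] at hrecn
        -- A (q+2) strictly exceeds each B term in its recurrence
        have hAp1 : ∀ j : Fin k, B ((q+1)*k + (j:ℕ) + 1) < A (q + 2) := by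
          intro j
          obtain ⟨j', _, hj'⟩ := Finset.exists_mem_ne
            (s := (Finset.univ : Finset (Fin k))) (by simpa using hk) j
          have hj'mem : j' ∈ (Finset.univ : Finset (Fin k)).erase j :=
            Finset.mem_erase.mpr ⟨hj', Finset.mem_univ _⟩
          have hsplit := Finset.add_sum_erase (Finset.univ : Finset (Fin k))
            (fun j : Fin k => a j * B ((q+1)*k + (j:ℕ) + 1)) (Finset.mem_univ j)
          have hge : a j' * B ((q+1)*k + (j':ℕ) + 1) ≤
              ∑ t ∈ (Finset.univ : Finset (Fin k)).erase j, a t * B ((q+1)*k + (t:ℕ) + 1) :=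
            Finset.single_le_sum (f := fun t : Fin k => a t * B ((q+1)*k + (t:ℕ) + 1))
              (fun t _ => Nat.zero_le _) hj'mem
          have h1 : B ((q+1)*k + (j:ℕ) + 1) ≤ a j * B ((q+1)*k + (j:ℕ) + 1) :=
            Nat.le_mul_of_pos_left _ (ha j)
          have h2 : 1 ≤ a j' * B ((q+1)*k + (j':ℕ) + 1) :=
            Nat.mul_pos (ha j') (hB1 _ (by omega))
          rw [hrecn]
          omega
        -- the counting identity for each B term
        have hex : ∀ j : Fin k, ∃ cj : ℕ,
            B ((q+1)*k + (j:ℕ) + 1) = (q+1)*k + (j:ℕ) + 1 + cj ∧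
            cj ≤ q + 1 ∧
            (1 ≤ cj → A cj < B ((q+1)*k + (j:ℕ) + 1)) ∧
            cj = ((Icc 1 (q+1)).filter fun i => A i < B ((q+1)*k + (j:ℕ) + 1)).card := by
          intro j
          refine ⟨((Icc 1 (q+1)).filter fun i => A i < B ((q+1)*k + (j:ℕ) + 1)).card,
            ?_, ?_, ?_, rfl⟩
          · exact countB A B hcomp _ (q+1) (by omega) (fun i hi1 hilt => by
              have := lt_index A hA hi1 (by omega) (hilt.trans (hAp1 j))
              omega)
          · calc ((Icc 1 (q+1)).filter fun i => A i < B ((q+1)*k + (j:ℕ) + 1)).card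
                ≤ (Icc 1 (q+1)).card := Finset.card_filter_le _ _
              _ = q + 1 := by simp
          · intro hpos
            exact (dc_card A hA (q+1) (B ((q+1)*k + (j:ℕ) + 1)) hpos).2.2
        choose c hc1 hc2 hc3 hc4 using hex
        -- the sum identity
        have hsum : A (q+2) = ((q+1)*k + 1) * τ + D + ∑ j : Fin k, a j * c j := by
          rw [hrecn]
          have hterm : ∀ j : Fin k, a j * B ((q+1)*k + (j:ℕ) + 1) =
              ((q+1)*k+1) * a j + ((j:ℕ) * a j + a j * c j) := by
            intro j
            rw [hc1 j]
            ring
          rw [Finset.sum_congr rfl (fun j _ => hterm j), Finset.sum_add_distrib,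
            Finset.sum_add_distrib, ← Finset.mul_sum, ← hτdef, ← hDdef]
          ring
        -- LOWER BOUND
        have hk0 : (0:ℕ) < k := by omega
        have hc0le : ∀ j : Fin k, c ⟨0, hk0⟩ ≤ c j := by
          intro j
          rw [hc4 ⟨0, hk0⟩, hc4 j]
          apply Finset.card_le_card
          intro i hi
          obtain ⟨hi1, hi2⟩ := Finset.mem_filter.mp hi
          refine Finset.mem_filter.mpr ⟨hi1, lt_of_lt_of_le hi2 ?_⟩
          apply mono_le B hB (by omega)
          have : ((⟨0, hk0⟩ : Fin k) : ℕ) = 0 := rfl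
          omega
        have hclaim : q + 1 ≤ τ * (c ⟨0, hk0⟩ + 1) := by
          by_contra hcon
          push_neg at hcon
          have hτcq : τ * (c ⟨0, hk0⟩ + 1) ≤ q := by omega
          have hsub : Icc 1 (c ⟨0, hk0⟩ + 1) ⊆
              (Icc 1 (q+1)).filter fun i => A i < B ((q+1)*k + ((⟨0, hk0⟩ : Fin k):ℕ) + 1) := by
            intro i hi
            obtain ⟨hi1, hi2⟩ := Finset.mem_Icc.mp hi
            have hmul1 : c ⟨0, hk0⟩ + 1 ≤ τ * (c ⟨0, hk0⟩ + 1) :=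
              Nat.le_mul_of_pos_left _ (by omega)
            have hiq : i ≤ q := by omega
            have hup := (IH i (by omega) (by omega)).2
            have hm2 : i * (k*τ+1) ≤ (c ⟨0, hk0⟩ + 1) * (k*τ+1) :=
              Nat.mul_le_mul_right _ (by omega)
            have hm3 : k * (τ * (c ⟨0, hk0⟩ + 1)) ≤ k * q :=
              Nat.mul_le_mul_left _ hτcq
            have hm4 : (c ⟨0, hk0⟩ + 1) * (k*τ+1) = k * (τ * (c ⟨0, hk0⟩ + 1)) + (c ⟨0, hk0⟩ + 1) := by
              ring
            have hm5 : (q+1)*k = k*q + k := by ring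
            have hBj0 := hc1 ⟨0, hk0⟩
            have hj0v : ((⟨0, hk0⟩ : Fin k) : ℕ) = 0 := rfl
            refine Finset.mem_filter.mpr ⟨Finset.mem_Icc.mpr ⟨hi1, by omega⟩, by omega⟩
          have hcard := Finset.card_le_card hsub
          rw [Nat.card_Icc, ← hc4 ⟨0, hk0⟩] at hcard
          omega
        have hlow : (q+1)*(k*τ+1) + D ≤ A (q+2) := by
          rw [hsum]
          have hl1 : τ * c ⟨0, hk0⟩ ≤ ∑ j : Fin k, a j * c j := by
            calc τ * c ⟨0, hk0⟩ = ∑ j : Fin k, a j * c ⟨0, hk0⟩ := by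
                  rw [hτdef, Finset.sum_mul]
              _ ≤ ∑ j : Fin k, a j * c j :=
                  Finset.sum_le_sum (fun j _ => Nat.mul_le_mul_left _ (hc0le j))
          have hl2 : (q+1)*(k*τ+1) = (q+1)*k*τ + (q+1) := by ring
          have hl3 : ((q+1)*k+1)*τ = (q+1)*k*τ + τ := by ring
          have hl4 : τ*(c ⟨0, hk0⟩ + 1) = τ*(c ⟨0, hk0⟩) + τ := by ring
          omega
        -- UPPER BOUND
        have hupper : A (q+2) ≤ (q+2)*(k*τ+1) := by
          set T : Finset (Fin k) := Finset.univ.filter (fun j => 1 ≤ c j) with hTdef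
          have hsumT : ∑ j : Fin k, a j * c j = ∑ j ∈ T, a j * c j := by
            symm
            apply Finset.sum_subset (Finset.subset_univ T)
            intro j _ hj
            have hc0 : c j = 0 := by
              by_contra h0
              exact hj (Finset.mem_filter.mpr ⟨Finset.mem_univ j, by omega⟩)
            simp [hc0]
          have hRsplit : ∑ j ∈ T, a j * c j = (∑ j ∈ T, a j * (c j - 1)) + ∑ j ∈ T, a j := by
            rw [← Finset.sum_add_distrib]
            apply Finset.sum_congr rfl
            intro j hj
            have h1 : 1 ≤ c j := (Finset.mem_filter.mp hj).2
            have h2 : c j = (c j - 1) + 1 := by omega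
            calc a j * c j = a j * ((c j - 1) + 1) := by rw [← h2]
              _ = a j * (c j - 1) + a j := by ring
          have hperj : ∀ j ∈ T, k * τ * (a j * (c j - 1)) + D * a j ≤ ((q+1)*k + (j:ℕ) + 1) * a j := by
            intro j hj
            have h1 : 1 ≤ c j := (Finset.mem_filter.mp hj).2
            have hAc := hc3 j h1
            have hIH := (IH (c j) (by have := hc2 j; omega) h1).1
            obtain ⟨e, he⟩ : ∃ e, c j = e + 1 := ⟨c j - 1, by omega⟩
            have hBi := hc1 j
            have hexp : (c j - 1) * (k*τ+1) = k*τ*e + e := by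
              rw [he]; simp; ring
            have hkey : k*τ*e + D ≤ (q+1)*k + (j:ℕ) + 1 := by omega
            have hmul := Nat.mul_le_mul_right (a j) hkey
            calc k*τ*(a j * (c j - 1)) + D * a j = (k*τ*e + D) * a j := by
                  rw [he]; simp; ring
              _ ≤ ((q+1)*k + (j:ℕ) + 1) * a j := hmul
          have hsum2 : k*τ*(∑ j ∈ T, a j * (c j - 1)) + D * (∑ j ∈ T, a j) ≤
              ((q+1)*k+1) * (∑ j ∈ T, a j) + D := by
            have h1 := Finset.sum_le_sum hperj
            have h2 : ∑ j ∈ T, (k*τ*(a j * (c j - 1)) + D * a j) =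
                k*τ*(∑ j ∈ T, a j*(c j - 1)) + D*(∑ j ∈ T, a j) := by
              rw [Finset.mul_sum, Finset.mul_sum, ← Finset.sum_add_distrib]
            have h3 : ∑ j ∈ T, ((q+1)*k + (j:ℕ) + 1) * a j =
                ((q+1)*k+1)*(∑ j ∈ T, a j) + ∑ j ∈ T, (j:ℕ)*a j := by
              rw [Finset.mul_sum, ← Finset.sum_add_distrib]
              exact Finset.sum_congr rfl (fun j _ => by ring)
            have h4 : ∑ j ∈ T, (j:ℕ)*a j ≤ D := by
              rw [hDdef]
              exact Finset.sum_le_sum_of_subset (Finset.subset_univ T)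
            omega
          have htτ : ∑ j ∈ T, a j ≤ τ := by
            rw [hτdef]
            exact Finset.sum_le_sum_of_subset (Finset.subset_univ T)
          rw [hsum, hsumT, hRsplit]
          -- final arithmetic over ℤ
          have h1k : 1 ≤ k := by omega
          have hDkZ : (k:ℤ) - 1 ≤ (D:ℤ) := by
            have h := hDk; zify [h1k] at h; exact h
          have hDubZ : (D:ℤ) + ((k:ℤ) - 1) ≤ ((k:ℤ) - 1) * (τ:ℤ) := by
            have h := hDub; zify [h1k] at h; exact h
          have hDbddZ : (D:ℤ) + (τ:ℤ) ≤ ((k:ℤ) - 1) * (τ:ℤ) + 2 := by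
            have h := hDbdd; zify [h1k] at h; exact h
          have hgoalZ := arithMain (k:ℤ) (τ:ℤ) (D:ℤ)
            ((∑ j ∈ T, a j * (c j - 1) : ℕ) : ℤ) ((∑ j ∈ T, a j : ℕ) : ℤ) (q:ℤ)
            (by exact_mod_cast hk) (by exact_mod_cast hτk) hDkZ hDubZ hDbddZ
            (Int.natCast_nonneg _) (Int.natCast_nonneg _) (Int.natCast_nonneg _)
            (by exact_mod_cast htτ) (by exact_mod_cast hsum2)
          exact_mod_cast hgoalZ
        refine ⟨?_, hupper⟩
        rw [h21]
        exact hlow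
  intro n hn1
  obtain ⟨hlo, hhi⟩ := main n hn1
  refine ⟨?_, hhi⟩
  have : 1 ≤ D := by omega
  omega
end

section
/- Let a be an A_1-bounded positive integer vector of dimension k > 1 with trace τ and κ = kτ + 1. Then the sequence n ↦ A_n - κ·n is τ-automatic; equivalently, there is a τ-uniform substitution on an alphabet of size at most 2τ - 1 whose fixed point, under a coding, equals the sequence (A_n mod κ)_{n≥1}, and A_n - κn takes at most 2τ - 1 distinct values. -/
open Finset

theorem StrictMonoOn.apply_add_le {f : ℕ → ℕ} {a i : ℕ} (hf : StrictMonoOn f (Set.Ici a))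
    (hi : a ≤ i) (d : ℕ) : f i + d ≤ f (i + d) := by
  induction d with
  | zero => rfl
  | succ d ih =>
    have : f (i + d) < f (i + (d + 1)) := hf (by simp; omega) (by simp; omega) (by omega)
    omega

theorem StrictMonoOn.le_apply {f : ℕ → ℕ} {i : ℕ} (hf : StrictMonoOn f (Set.Ici 1))
    (hf1 : 1 ≤ f 1) (hi : 1 ≤ i) : i ≤ f i := by
  have := hf.apply_add_le le_rfl (i - 1)
  rw [Nat.add_sub_cancel' hi] at this
  omega

theorem StrictMonoOn.filter_Icc_apply_le {f : ℕ → ℕ} {i N : ℕ} (hf : StrictMonoOn f (Set.Ici 1))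
    (hi : 1 ≤ i) (hiN : i ≤ N) : {i' ∈ Icc 1 N | f i' ≤ f i} = Icc 1 i := by
  ext i'
  simp only [mem_filter, mem_Icc]
  constructor
  · rintro ⟨⟨hi', -⟩, hle⟩
    exact ⟨hi', (hf.le_iff_le hi' hi).1 hle⟩
  · rintro ⟨hi', hle⟩
    exact ⟨⟨hi', hle.trans hiN⟩, (hf.le_iff_le hi' hi).2 hle⟩

open Classical in
theorem StrictMonoOn.card_filter_Icc_apply_le {f : ℕ → ℕ} (hf : StrictMonoOn f (Set.Ici 1))
    (hf1 : 1 ≤ f 1) (N : ℕ) :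
    #{i ∈ Icc 1 N | f i ≤ N} = #{x ∈ Icc 1 N | ∃ n, 1 ≤ n ∧ f n = x} := by
  have himage : {x ∈ Icc 1 N | ∃ n, 1 ≤ n ∧ f n = x} = {i ∈ Icc 1 N | f i ≤ N}.image f := by
    ext x
    simp only [mem_filter, mem_Icc, mem_image]
    constructor
    · rintro ⟨⟨-, hxN⟩, n, hn, rfl⟩
      exact ⟨n, ⟨⟨hn, (hf.le_apply hf1 hn).trans hxN⟩, hxN⟩, rfl⟩
    · rintro ⟨n, ⟨⟨hn, -⟩, hnN⟩, rfl⟩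
      exact ⟨⟨hn.trans (hf.le_apply hf1 hn), hnN⟩, n, hn, rfl⟩
  rw [himage, card_image_of_injOn (hf.injOn.mono fun n hn => (mem_Icc.1 (mem_filter.1 hn).1).1)]

namespace CompPair

variable {A B : ℕ → ℕ}

theorem symm (h : CompPair A B) : CompPair B A :=
  ⟨h.2.1, h.1, h.2.2.2.1, h.2.2.1, fun m hm => (h.2.2.2.2 m hm).symm.imp And.symm And.symm⟩

theorem le_fst (h : CompPair A B) {i : ℕ} (hi : 1 ≤ i) : i ≤ A i :=
  h.1.le_apply (h.2.2.1 1 le_rfl) hi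

theorem le_snd (h : CompPair A B) {m : ℕ} (hm : 1 ≤ m) : m ≤ B m :=
  h.2.1.le_apply (h.2.2.2.1 1 le_rfl) hm

theorem fst_ne_snd (h : CompPair A B) {i m : ℕ} (hi : 1 ≤ i) (hm : 1 ≤ m) : A i ≠ B m := by
  intro heq
  rcases h.2.2.2.2 (A i) (h.2.2.1 i hi) with ⟨-, hB⟩ | ⟨hA, -⟩
  · exact hB ⟨m, hm, heq.symm⟩
  · exact hA ⟨i, hi, rfl⟩

open Classical in
theorem card_fst_le_add_card_snd_le (h : CompPair A B) (N : ℕ) :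
    #{i ∈ Icc 1 N | A i ≤ N} + #{m ∈ Icc 1 N | B m ≤ N} = N := by
  obtain ⟨hA, hB, hA1, hB1, hcov⟩ := h
  rw [hA.card_filter_Icc_apply_le (hA1 1 le_rfl), hB.card_filter_Icc_apply_le (hB1 1 le_rfl)]
  have hcompl : {x ∈ Icc 1 N | ∃ n, 1 ≤ n ∧ B n = x} =
      {x ∈ Icc 1 N | ¬ ∃ n, 1 ≤ n ∧ A n = x} := by
    refine filter_congr fun x hx => ?_
    rcases hcov x (mem_Icc.1 hx).1 with ⟨hA, hB⟩ | ⟨hA, hB⟩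
    exacts [iff_of_false hB (not_not_intro hA), iff_of_true hB hA]
  rw [hcompl, card_filter_add_card_filter_not, Nat.card_Icc, Nat.add_sub_cancel]

theorem card_snd_le_fst (h : CompPair A B) {i : ℕ} (hi : 1 ≤ i) :
    #{m ∈ Icc 1 (A i) | B m ≤ A i} = A i - i := by
  have := h.card_fst_le_add_card_snd_le (A i)
  rw [h.1.filter_Icc_apply_le hi (h.le_fst hi), Nat.card_Icc] at this
  omega

theorem snd_lt_fst_iff (h : CompPair A B) {i m : ℕ} (hi : 1 ≤ i) (hm : 1 ≤ m) :
    B m < A i ↔ m + i ≤ A i := by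
  have hcard := h.card_snd_le_fst hi
  constructor
  · intro hlt
    have hsub : Icc 1 m ⊆ {m' ∈ Icc 1 (A i) | B m' ≤ A i} := by
      intro m' hm'
      obtain ⟨hm'1, hm'm⟩ := mem_Icc.1 hm'
      have hBm' : B m' ≤ B m := (h.2.1.le_iff_le hm'1 hm).2 hm'm
      have := h.le_snd hm'1
      exact mem_filter.2 ⟨mem_Icc.2 ⟨hm'1, by omega⟩, by omega⟩
    have := card_le_card hsub
    rw [Nat.card_Icc, hcard] at this
    omega
  · intro hle
    by_contra hge
    have hlt : A i < B m := lt_of_le_of_ne (not_lt.1 hge) (h.fst_ne_snd hi hm)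
    have hsub : {m' ∈ Icc 1 (A i) | B m' ≤ A i} ⊆ Icc 1 (m - 1) := by
      intro m' hm'
      obtain ⟨hm'Icc, hm'le⟩ := mem_filter.1 hm'
      have hm'1 := (mem_Icc.1 hm'Icc).1
      have : m' < m := (h.2.1.lt_iff_lt hm'1 hm).1 (by omega)
      exact mem_Icc.2 ⟨hm'1, by omega⟩
    have := card_le_card hsub
    rw [Nat.card_Icc, hcard] at this
    omega

theorem add_le_snd_iff (h : CompPair A B) {i m : ℕ} (hi : 1 ≤ i) (hm : 1 ≤ m) :
    m + i ≤ B m ↔ A i < m + i := by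
  have hBA := h.snd_lt_fst_iff hi hm
  have hAB := h.symm.snd_lt_fst_iff hm hi
  have hne := h.fst_ne_snd hi hm
  omega

theorem snd_eq_of_bounds (h : CompPair A B) {m q : ℕ} (hm : 1 ≤ m)
    (hlow : ∀ i, 1 ≤ i → i ≤ q → A i < m + i) (hhigh : m + q + 2 ≤ A (q + 2)) :
    B m = m + q + if A (q + 1) < m + q + 1 then 1 else 0 := by
  have hmB := h.le_snd hm
  have hq : m + q ≤ B m := by
    rcases Nat.eq_zero_or_pos q with rfl | hq
    · simpa using hmB
    · exact (h.add_le_snd_iff hq hm).2 (hlow q hq le_rfl)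
  have hq1 := h.add_le_snd_iff (i := q + 1) (by omega) hm
  have hq2 := h.add_le_snd_iff (i := q + 2) (by omega) hm
  split_ifs <;> omega

end CompPair

open Encodable Denumerable in
theorem exists_uniform_substitution {α : Type*} [Denumerable α] {τ : ℕ} (u : ℕ → α)
    (G : α → Fin τ → α) (I : Finset α) (hu : u 0 ∈ I) (hG : ∀ e ∈ I, ∀ j, G e j ∈ I)
    (hrec : ∀ n, ∀ j : Fin τ, u (τ * n + j) = G (u n) j) (f : α → ℕ) :
    ∃ (S : Finset ℕ) (σ : ℕ → Fin τ → ℕ) (ω : ℕ → ℕ) (c : ℕ → ℕ),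
      #S ≤ #I ∧ (∀ s ∈ S, ∀ j, σ s j ∈ S) ∧ ω 0 ∈ S ∧
      (∀ n, ∀ j : Fin τ, ω (τ * n + j) = σ (ω n) j) ∧ ∀ n, f (u n) = c (ω n) := by
  refine ⟨I.image encode, fun s j => encode (G (ofNat α s) j), fun n => encode (u n),
    fun s => f (ofNat α s), card_image_le, ?_, mem_image_of_mem _ hu,
    fun n j => by simp only [hrec, ofNat_encode], fun n => by simp only [ofNat_encode]⟩
  rintro _ hs j
  obtain ⟨e, he, rfl⟩ := mem_image.1 hs
  simpa only [ofNat_encode] using mem_image_of_mem encode (hG e he j)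

namespace AntiRec

variable {k : ℕ}

def trace (a : Fin k → ℕ) : ℕ := ∑ j, a j

def firstTerm (a : Fin k → ℕ) : ℕ := ∑ j : Fin k, ((j : ℕ) + 1) * a j

def discrepancy (a : Fin k → ℕ) (A : ℕ → ℕ) (n : ℕ) : ℤ :=
  A n - ((k * trace a + 1 : ℕ) : ℤ) * n

-- `carry a (d (q + 1)) r` is the `a`-weighted number of indices `m = (τq + r)k + j + 1` with
-- `A (q + 1) < m + q + 1`, the condition rewritten through `d (q + 1) = A (q + 1) - κ (q + 1)`.
def carry (a : Fin k → ℕ) (e : ℤ) (r : ℕ) : ℤ :=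
  ∑ j : Fin k, if e + k * trace a < r * k + j + 1 then (a j : ℤ) else 0

def next (a : Fin k → ℕ) (e : ℤ) (r : ℕ) : ℤ :=
  firstTerm a - k * trace a - r - 1 + carry a e r

noncomputable def window (a : Fin k → ℕ) : Finset ℤ :=
  Finset.Icc (firstTerm a - k * trace a - trace a) (firstTerm a - k * trace a + trace a - 2)

variable {a : Fin k → ℕ}

theorem card_window : #(window a) = 2 * trace a - 1 := by
  rw [window, Int.card_Icc]
  omega

theorem card_le_trace (ha : ∀ j, 0 < a j) : k ≤ trace a := by
  calc k = ∑ _j : Fin k, 1 := by simp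
    _ ≤ trace a := sum_le_sum fun j _ => ha j

theorem trace_add_one_le_firstTerm (hk : 1 < k) (ha : ∀ j, 0 < a j) :
    trace a + 1 ≤ firstTerm a := by
  have hsplit : firstTerm a = trace a + ∑ j : Fin k, (j : ℕ) * a j := by
    rw [firstTerm, trace, ← sum_add_distrib]
    exact sum_congr rfl fun j _ => by ring
  have hone := single_le_sum (f := fun j : Fin k => (j : ℕ) * a j) (fun _ _ => Nat.zero_le _)
    (mem_univ ⟨1, hk⟩)
  simp only [one_mul] at hone
  have := ha ⟨1, hk⟩
  omega

theorem one_sub_le_of_mem_window (hk : 1 < k) (ha : ∀ j, 0 < a j) {e : ℤ}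
    (he : e ∈ window a) : 1 - k * trace a ≤ e := by
  have := trace_add_one_le_firstTerm hk ha
  have := (mem_Icc.1 he).1
  omega

theorem nonpos_of_mem_window (hk : 1 ≤ k) (hbdd : firstTerm a ≤ (k - 1) * trace a + 2) {e : ℤ}
    (he : e ∈ window a) : e ≤ 0 := by
  have hbddZ : (firstTerm a : ℤ) ≤ ((k - 1 : ℕ) : ℤ) * trace a + 2 := by exact_mod_cast hbdd
  rw [Nat.cast_sub hk, Nat.cast_one] at hbddZ
  have := (mem_Icc.1 he).2
  linarith

theorem cast_trace : ((trace a : ℕ) : ℤ) = ∑ j, (a j : ℤ) := by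
  simp [trace]

theorem carry_nonneg (e : ℤ) (r : ℕ) : 0 ≤ carry a e r :=
  sum_nonneg fun j _ => by positivity

theorem carry_le_trace (e : ℤ) (r : ℕ) : carry a e r ≤ trace a :=
  cast_trace ▸ sum_le_sum fun j _ => by split_ifs <;> simp

theorem carry_zero_le (hk : 0 < k) {e : ℤ} (he : 1 - k * trace a ≤ e) :
    carry a e 0 ≤ trace a - a ⟨0, hk⟩ := by
  have hsplit := add_sum_erase univ (fun j : Fin k => (a j : ℤ)) (mem_univ ⟨0, hk⟩)
  have hrest : (∑ j ∈ univ.erase (⟨0, hk⟩ : Fin k),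
      if e + k * trace a < ((0 : ℕ) : ℤ) * k + (j : ℕ) + 1 then (a j : ℤ) else 0) ≤
      ∑ j ∈ univ.erase ⟨0, hk⟩, (a j : ℤ) :=
    sum_le_sum fun j _ => by split_ifs <;> simp
  rw [carry, ← add_sum_erase _ _ (mem_univ ⟨0, hk⟩), if_neg (by simp; omega)]
  rw [← cast_trace] at hsplit
  linarith

theorem next_mem_window (hk : 1 < k) (ha : ∀ j, 0 < a j) {e : ℤ} {r : ℕ}
    (he : 1 - k * trace a ≤ e) (hr : r < trace a) : next a e r ∈ window a := by
  have ha0 : (1 : ℤ) ≤ a ⟨0, by omega⟩ := by exact_mod_cast ha _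
  have hrZ : (r : ℤ) + 1 ≤ trace a := by exact_mod_cast hr
  have := carry_nonneg (a := a) e r
  have := carry_le_trace (a := a) e r
  rw [next, window, mem_Icc]
  constructor
  · linarith
  · rcases Nat.eq_zero_or_pos r with rfl | hr0
    · have := carry_zero_le (by omega) he
      push_cast
      linarith
    · have : (1 : ℤ) ≤ r := by exact_mod_cast hr0
      linarith

variable {A B : ℕ → ℕ}

theorem add_le_apply_succ (h : AntiRec k a A B) {n : ℕ} (hn : 1 ≤ n) :
    A n + k * trace a ≤ A (n + 1) := by
  obtain ⟨n, rfl⟩ : ∃ n', n = n' + 1 := ⟨n - 1, by omega⟩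
  rw [h.2 _ hn, h.2 _ (by omega), Nat.add_sub_cancel, Nat.add_sub_cancel, trace, mul_sum,
    ← sum_add_distrib]
  refine sum_le_sum fun j _ => ?_
  have hB := h.1.2.1.apply_add_le (i := n * k + j + 1) (by omega) k
  rw [show n * k + j + 1 + k = (n + 1) * k + j + 1 by ring] at hB
  rw [mul_comm k, ← mul_add]
  exact Nat.mul_le_mul_left _ hB

theorem firstTerm_le_apply_one (h : AntiRec k a A B) : firstTerm a ≤ A 1 := by
  rw [h.2 1 le_rfl, firstTerm]
  refine sum_le_sum fun j _ => ?_
  rw [mul_comm]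
  gcongr
  simpa using h.1.le_snd (by omega : 1 ≤ (j : ℕ) + 1)

theorem B_eq (h : AntiRec k a A B) {q r j : ℕ} (hr : r < trace a) (hj : j < k)
    (hlow : ∀ i, 1 ≤ i → i ≤ q → discrepancy a A i ≤ 0)
    (hq : 1 - k * trace a ≤ discrepancy a A (q + 1)) :
    B ((trace a * q + r) * k + j + 1) = (trace a * q + r) * k + j + 1 + q +
      if discrepancy a A (q + 1) + k * trace a < r * k + j + 1 then 1 else 0 := by
  rw [discrepancy] at hq
  push_cast at hq
  rw [h.1.snd_eq_of_bounds (by omega) ?below ?above]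
  · simp only [discrepancy]
    congr 2
    apply propext
    zify
    constructor <;> intro <;> linarith
  case below =>
    intro i hi hiq
    have hAi := hlow i hi hiq
    rw [discrepancy] at hAi
    push_cast at hAi
    have : (k * trace a * i : ℤ) ≤ k * trace a * q := by gcongr
    zify
    nlinarith
  case above =>
    have hgap := h.add_le_apply_succ (n := q + 1) (by omega)
    have hmk : (r + 1) * k ≤ trace a * k := Nat.mul_le_mul_right k hr
    zify at hgap hmk ⊢
    linarith

theorem discrepancy_eq_next (h : AntiRec k a A B) {q r : ℕ} (hr : r < trace a)
    (hlow : ∀ i, 1 ≤ i → i ≤ q → discrepancy a A i ≤ 0)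
    (hq : 1 - k * trace a ≤ discrepancy a A (q + 1)) :
    discrepancy a A (trace a * q + r + 1) = next a (discrepancy a A (q + 1)) r := by
  set e := discrepancy a A (q + 1)
  have hterm : ∀ j : Fin k, ((a j * B ((trace a * q + r) * k + j + 1) : ℕ) : ℤ) =
      ((trace a * q + r) * k + q : ℕ) * a j + ((j : ℕ) + 1) * a j +
        if e + k * trace a < r * k + j + 1 then (a j : ℤ) else 0 := by
    intro j
    rw [h.B_eq hr j.2 hlow hq]
    split_ifs <;> push_cast <;> ring
  have hA : (A (trace a * q + r + 1) : ℤ) =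
      ((trace a * q + r) * k + q : ℕ) * trace a + firstTerm a + carry a e r := by
    rw [h.2 _ (by omega), Nat.add_sub_cancel, Nat.cast_sum, sum_congr rfl fun j _ => hterm j,
      sum_add_distrib, sum_add_distrib, ← mul_sum, ← cast_trace, carry, firstTerm]
    push_cast
    rfl
  rw [discrepancy, hA, next]
  push_cast
  ring

theorem one_sub_le_discrepancy_one (hk : 1 < k) (ha : ∀ j, 0 < a j) (h : AntiRec k a A B) :
    1 - k * trace a ≤ discrepancy a A 1 := by
  have := card_le_trace ha
  have := (trace_add_one_le_firstTerm hk ha).trans h.firstTerm_le_apply_one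
  rw [discrepancy]
  push_cast
  omega

theorem discrepancy_mem_window (hk : 1 < k) (ha : ∀ j, 0 < a j)
    (hbdd : firstTerm a ≤ (k - 1) * trace a + 2) (h : AntiRec k a A B) {n : ℕ} (hn : 1 ≤ n) :
    discrepancy a A n ∈ window a := by
  induction n using Nat.strong_induction_on with
  | _ n ih =>
  have hτ : 2 ≤ trace a := hk.trans_le (card_le_trace ha)
  obtain ⟨q, r, hr, rfl⟩ : ∃ q r, r < trace a ∧ n = trace a * q + r + 1 :=
    ⟨(n - 1) / trace a, (n - 1) % trace a, Nat.mod_lt _ (by omega), by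
      rw [Nat.div_add_mod]; omega⟩
  have hqn : q < trace a * q + r + 1 := by nlinarith
  have hlow (i : ℕ) (hi : 1 ≤ i) (hiq : i ≤ q) : discrepancy a A i ≤ 0 :=
    nonpos_of_mem_window hk.le hbdd (ih i (by omega) hi)
  have hq : 1 - k * trace a ≤ discrepancy a A (q + 1) := by
    rcases Nat.eq_zero_or_pos q with rfl | hq0
    · exact one_sub_le_discrepancy_one hk ha h
    · exact one_sub_le_of_mem_window hk ha (ih (q + 1) (by nlinarith) (by omega))
  rw [h.discrepancy_eq_next hr hlow hq]
  exact next_mem_window hk ha hq hr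

theorem toNat_discrepancy_emod (n : ℕ) :
    (discrepancy a A n % ((k * trace a + 1 : ℕ) : ℤ)).toNat = A n % (k * trace a + 1) := by
  rw [discrepancy, sub_eq_add_neg, ← mul_neg, Int.add_mul_emod_self_left, ← Int.natCast_mod,
    Int.toNat_natCast]

end AntiRec

open AntiRec in
/-- For an A₁-bounded form with trace τ and κ = kτ+1, the difference sequence
A n - κn is τ-automatic: there is a τ-uniform substitution on an alphabet of at most
2τ - 1 letters whose fixed point, under a coding, gives (A n mod κ); moreover
A n - κn takes at most 2τ - 1 distinct values. -/
theorem stmt15 (k : ℕ) (hk : 1 < k) (a : Fin k → ℕ) (ha : ∀ j, 0 < a j)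
    (A B : ℕ → ℕ) (h : AntiRec k a A B)
    (hbdd : (∑ j : Fin k, ((j : ℕ) + 1) * a j) ≤ (k - 1) * (∑ j : Fin k, a j) + 2)
    (τ : ℕ) (hτ : τ = ∑ j : Fin k, a j) (κ : ℕ) (hκ : κ = k * τ + 1) :
    (∃ (S : Finset ℕ) (σ : ℕ → Fin τ → ℕ) (ω : ℕ → ℕ) (c : ℕ → ℕ),
      S.card ≤ 2 * τ - 1 ∧
      (∀ s ∈ S, ∀ j : Fin τ, σ s j ∈ S) ∧
      ω 0 ∈ S ∧
      (∀ n : ℕ, ∀ j : Fin τ, ω (τ * n + (j : ℕ)) = σ (ω n) j) ∧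
      (∀ n, 1 ≤ n → A n % κ = c (ω (n - 1)))) ∧
    (Set.range (fun n : ℕ => (A (n + 1) : ℤ) - κ * (n + 1))).Finite ∧
    (Set.range (fun n : ℕ => (A (n + 1) : ℤ) - κ * (n + 1))).ncard ≤ 2 * τ - 1 := by
  obtain rfl : τ = trace a := hτ
  subst hκ
  have hmem {n : ℕ} (hn : 1 ≤ n) := discrepancy_mem_window hk ha hbdd h hn
  have hrec (n : ℕ) (j : Fin (trace a)) :
      discrepancy a A (trace a * n + j + 1) = next a (discrepancy a A (n + 1)) j :=
    h.discrepancy_eq_next j.2 (fun i hi _ => nonpos_of_mem_window hk.le hbdd (hmem hi))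
      (one_sub_le_of_mem_window hk ha (hmem (by omega)))
  have hrange : Set.range (fun n : ℕ => (A (n + 1) : ℤ) - ((k * trace a + 1 : ℕ) : ℤ) * (n + 1))
      ⊆ window a := by
    rintro _ ⟨n, rfl⟩
    simpa only [discrepancy, Nat.cast_add_one, mem_coe] using hmem (n := n + 1) (by omega)
  refine ⟨?_, (window a).finite_toSet.subset hrange, ?_⟩
  · obtain ⟨S, σ, ω, c, hcard, hS, h0, hω, hc⟩ :=
      exists_uniform_substitution (fun n => discrepancy a A (n + 1)) (fun e j => next a e j)
        (window a) (hmem le_rfl)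
        (fun e he j => next_mem_window hk ha (one_sub_le_of_mem_window hk ha he) j.2) hrec
        (fun e => (e % ((k * trace a + 1 : ℕ) : ℤ)).toNat)
    refine ⟨S, σ, ω, c, card_window ▸ hcard, hS, h0, hω, fun n hn => ?_⟩
    obtain ⟨m, rfl⟩ : ∃ m, n = m + 1 := ⟨n - 1, by omega⟩
    rw [Nat.add_sub_cancel, ← hc, toNat_discrepancy_emod]
  · calc _ ≤ (window a : Set ℤ).ncard := Set.ncard_le_ncard hrange (window a).finite_toSet
      _ = 2 * trace a - 1 := by rw [Set.ncard_coe_finset, card_window]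
end
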